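/- arXiv:2605.19667 — 8 statements merged into one kernel-verified Lean document; each statement's English description precedes it below -/
import Mathlib

section
/- Under the standing hypotheses, the constant c_s defined as the infimum of s' over the compact interval [z_β − (L_max − L_min)/τ, z_β + (L_max − L_min)/τ] is strictly positive, hence κ = c_s/τ > 0; and for every pair of Borel probability measures μ, ν on ℝ^d and every q lying between the soft β-quantiles q_ν and q_μ, one has (F_ν(q) − F_ν(q_ν))·(q − q_ν) ≥ κ·|q − q_ν|². -/
/-!
Every soft quantile `q` satisfies `τ z_β + L_min ≤ q ≤ τ z_β + L_max`, since the soft CDF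
`q ↦ ∫ s((q - L)/τ) dν` is squeezed between `s((q - L_max)/τ)` and `s((q - L_min)/τ)`. For `q`
in that range and every `x`, the argument `(q - L x)/τ` stays in the window
`[z_β - (L_max - L_min)/τ, z_β + (L_max - L_min)/τ]`, on which `s' ≥ c_s > 0` by compactness. The
mean value theorem then gives the strong monotonicity pointwise in `x`, and integrating in `ν`
gives it for the soft CDF.
-/

open MeasureTheory Filter Topology Set

theorem Convex.mul_sq_le_sub_mul_sub_of_le_deriv {D : Set ℝ} (hD : Convex ℝ D) {f : ℝ → ℝ}
    (hf : ContinuousOn f D) (hf' : DifferentiableOn ℝ f (interior D)) {C : ℝ}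
    (hf'_ge : ∀ x ∈ interior D, C ≤ deriv f x) {a b : ℝ} (ha : a ∈ D) (hb : b ∈ D) :
    C * (a - b) ^ 2 ≤ (f a - f b) * (a - b) := by
  wlog hba : b ≤ a generalizing a b
  · have := this hb ha (le_of_not_ge hba)
    linarith
  calc C * (a - b) ^ 2 = C * (a - b) * (a - b) := by ring
    _ ≤ (f a - f b) * (a - b) :=
      mul_le_mul_of_nonneg_right (hD.mul_sub_le_image_sub_of_le_deriv hf hf' hf'_ge b hb a ha hba)
        (sub_nonneg.2 hba)

theorem sInf_image_Icc_pos {f : ℝ → ℝ} {l u : ℝ} (hlu : l ≤ u)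
    (hf : ContinuousOn f (Icc l u)) (hpos : ∀ z ∈ Icc l u, 0 < f z) : 0 < sInf (f '' Icc l u) := by
  obtain ⟨z, hz, hfz⟩ :=
    (isCompact_Icc.image_of_continuousOn hf).sInf_mem ((nonempty_Icc.2 hlu).image f)
  exact hfz ▸ hpos z hz

theorem div_sub_mem_Icc_window {τ z Lmin Lmax r y : ℝ} (hτ : 0 < τ)
    (hr : r ∈ Icc (τ * z + Lmin) (τ * z + Lmax)) (hy : y ∈ Icc Lmin Lmax) :
    (r - y) / τ ∈ Icc (z - (Lmax - Lmin) / τ) (z + (Lmax - Lmin) / τ) := by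
  have hlo : z - (Lmax - Lmin) / τ = (τ * z - (Lmax - Lmin)) / τ := by field_simp
  have hhi : z + (Lmax - Lmin) / τ = (τ * z + (Lmax - Lmin)) / τ := by field_simp
  rw [hlo, hhi]
  constructor <;> apply div_le_div_of_nonneg_right _ hτ.le <;> linarith [hr.1, hr.2, hy.1, hy.2]

section SoftCdf

variable {α : Type*} [MeasurableSpace α] {s : ℝ → ℝ} {τ : ℝ} {L : α → ℝ} {ν : Measure α}

/-- The soft CDF `F_ν + β` of the loss `L` under `ν`. -/
noncomputable def softCdf (s : ℝ → ℝ) (τ : ℝ) (L : α → ℝ) (ν : Measure α) (q : ℝ) : ℝ :=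
  ∫ x, s ((q - L x) / τ) ∂ν

theorem integrable_soft_integrand [IsFiniteMeasure ν] (hs : Continuous s)
    (hs_pos : ∀ z, 0 < s z) (hs_lt1 : ∀ z, s z < 1) (hL : Measurable L) (q : ℝ) :
    Integrable (fun x => s ((q - L x) / τ)) ν := by
  have hmeas : Measurable fun x => s ((q - L x) / τ) :=
    hs.measurable.comp ((measurable_const.sub hL).div_const τ)
  refine .of_bound hmeas.aestronglyMeasurable 1 (ae_of_all _ fun x => ?_)
  rw [Real.norm_eq_abs, abs_of_pos (hs_pos _)]
  exact (hs_lt1 _).le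

variable [IsProbabilityMeasure ν]

theorem softCdf_le (hint : ∀ q, Integrable (fun x => s ((q - L x) / τ)) ν)
    (hs_mono : Monotone s) (hτ : 0 < τ) {Lmin : ℝ} (hLmin : ∀ x, Lmin ≤ L x) (q : ℝ) :
    softCdf s τ L ν q ≤ s ((q - Lmin) / τ) := by
  calc softCdf s τ L ν q ≤ ∫ _, s ((q - Lmin) / τ) ∂ν :=
        integral_mono (hint q) (integrable_const _) fun x => hs_mono (by gcongr; exact hLmin x)
    _ = s ((q - Lmin) / τ) := by simp

theorem le_softCdf (hint : ∀ q, Integrable (fun x => s ((q - L x) / τ)) ν)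
    (hs_mono : Monotone s) (hτ : 0 < τ) {Lmax : ℝ} (hLmax : ∀ x, L x ≤ Lmax) (q : ℝ) :
    s ((q - Lmax) / τ) ≤ softCdf s τ L ν q := by
  calc s ((q - Lmax) / τ) = ∫ _, s ((q - Lmax) / τ) ∂ν := by simp
    _ ≤ softCdf s τ L ν q :=
        integral_mono (integrable_const _) (hint q) fun x => hs_mono (by gcongr; exact hLmax x)

theorem softQuantile_mem_Icc (hint : ∀ q, Integrable (fun x => s ((q - L x) / τ)) ν)
    (hs_mono : StrictMono s) (hτ : 0 < τ) {Lmin Lmax : ℝ} (hLbd : ∀ x, Lmin ≤ L x ∧ L x ≤ Lmax)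
    {z q : ℝ} (hq : softCdf s τ L ν q = s z) :
    q ∈ Icc (τ * z + Lmin) (τ * z + Lmax) := by
  have hlo : s z ≤ s ((q - Lmin) / τ) :=
    hq ▸ softCdf_le hint hs_mono.monotone hτ (fun x => (hLbd x).1) q
  have hhi : s ((q - Lmax) / τ) ≤ s z :=
    hq ▸ le_softCdf hint hs_mono.monotone hτ (fun x => (hLbd x).2) q
  rw [hs_mono.le_iff_le, le_div_iff₀ hτ] at hlo
  rw [hs_mono.le_iff_le, div_le_iff₀ hτ] at hhi
  constructor <;> linarith

theorem mul_sq_le_softCdf_sub_mul_sub (hint : ∀ q, Integrable (fun x => s ((q - L x) / τ)) ν)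
    (hs_diff : Differentiable ℝ s) (hτ : 0 < τ) {Lmin Lmax z c : ℝ}
    (hLbd : ∀ x, Lmin ≤ L x ∧ L x ≤ Lmax)
    (hc : ∀ w ∈ Icc (z - (Lmax - Lmin) / τ) (z + (Lmax - Lmin) / τ), c ≤ deriv s w)
    {q q' : ℝ} (hq : q ∈ Icc (τ * z + Lmin) (τ * z + Lmax))
    (hq' : q' ∈ Icc (τ * z + Lmin) (τ * z + Lmax)) :
    c / τ * (q - q') ^ 2 ≤ (softCdf s τ L ν q - softCdf s τ L ν q') * (q - q') := by
  have hpoint (x : α) :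
      c / τ * (q - q') ^ 2 ≤ (s ((q - L x) / τ) - s ((q' - L x) / τ)) * (q - q') := by
    have hmvt := (convex_Icc _ _).mul_sq_le_sub_mul_sub_of_le_deriv hs_diff.continuous.continuousOn
      hs_diff.differentiableOn (fun w hw => hc w (interior_subset hw))
      (div_sub_mem_Icc_window hτ hq (hLbd x)) (div_sub_mem_Icc_window hτ hq' (hLbd x))
    rw [← sub_div, sub_sub_sub_cancel_right, div_pow, mul_div_assoc'] at hmvt
    calc c / τ * (q - q') ^ 2 = τ * (c * (q - q') ^ 2 / τ ^ 2) := by field_simp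
      _ ≤ τ * ((s ((q - L x) / τ) - s ((q' - L x) / τ)) * ((q - q') / τ)) := by gcongr
      _ = (s ((q - L x) / τ) - s ((q' - L x) / τ)) * (q - q') := by field_simp
  calc c / τ * (q - q') ^ 2 = ∫ _, c / τ * (q - q') ^ 2 ∂ν := by simp
    _ ≤ ∫ x, (s ((q - L x) / τ) - s ((q' - L x) / τ)) * (q - q') ∂ν :=
        integral_mono (integrable_const _) (((hint q).sub (hint q')).mul_const _) hpoint
    _ = (softCdf s τ L ν q - softCdf s τ L ν q') * (q - q') := by
        rw [integral_mul_const, integral_sub (hint q) (hint q'), softCdf, softCdf]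

end SoftCdf

theorem soft_quantile_strong_monotonicity_general
    (d : ℕ) (s : ℝ → ℝ)
    (hs_diff : ContDiff ℝ 1 s) (hs_mono : StrictMono s)
    (hs_pos : ∀ z, 0 < s z) (hs_lt1 : ∀ z, s z < 1)
    (hs_deriv_pos : ∀ z, 0 < deriv s z)
    (β τ : ℝ) (hτ : 0 < τ)
    (L : EuclideanSpace ℝ (Fin d) → ℝ) (hL : Measurable L)
    (Lmin Lmax : ℝ) (hLbd : ∀ x, Lmin ≤ L x ∧ L x ≤ Lmax)
    (zβ : ℝ) (hzβ : s zβ = β)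
    (cs κ : ℝ)
    (hcs : cs = sInf (deriv s ''
      Set.Icc (zβ - (Lmax - Lmin) / τ) (zβ + (Lmax - Lmin) / τ)))
    (hκ : κ = cs / τ) :
    0 < cs ∧ 0 < κ ∧
      ∀ (μ ν : Measure (EuclideanSpace ℝ (Fin d))),
        IsProbabilityMeasure μ → IsProbabilityMeasure ν →
        ∀ qμ qν q : ℝ,
          (∫ x, s ((qμ - L x) / τ) ∂μ = β) →
          (∫ x, s ((qν - L x) / τ) ∂ν = β) →
          q ∈ Set.uIcc qν qμ →
          ((∫ x, s ((q - L x) / τ) ∂ν - β) - (∫ x, s ((qν - L x) / τ) ∂ν - β))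
              * (q - qν)
            ≥ κ * |q - qν| ^ 2 := by
  have hderiv_cont : Continuous (deriv s) := hs_diff.continuous_deriv le_rfl
  have hwindow : zβ - (Lmax - Lmin) / τ ≤ zβ + (Lmax - Lmin) / τ := by
    have := div_nonneg (sub_nonneg.2 ((hLbd 0).1.trans (hLbd 0).2)) hτ.le
    linarith
  have hcs_pos : 0 < cs :=
    hcs ▸ sInf_image_Icc_pos hwindow hderiv_cont.continuousOn fun z _ => hs_deriv_pos z
  refine ⟨hcs_pos, hκ ▸ div_pos hcs_pos hτ, ?_⟩
  intro μ ν _ _ qμ qν q hμ hν hq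
  have hint (ρ : Measure (EuclideanSpace ℝ (Fin d))) [IsProbabilityMeasure ρ] (r : ℝ) :
      Integrable (fun x => s ((r - L x) / τ)) ρ :=
    integrable_soft_integrand hs_diff.continuous hs_pos hs_lt1 hL r
  have hqν := softQuantile_mem_Icc (hint ν) hs_mono hτ hLbd (hν.trans hzβ.symm)
  have hqμ := softQuantile_mem_Icc (hint μ) hs_mono hτ hLbd (hμ.trans hzβ.symm)
  have key := mul_sq_le_softCdf_sub_mul_sub (hint ν) (hs_diff.differentiable one_ne_zero) hτ hLbd
    (fun w hw => hcs ▸ csInf_le (isCompact_Icc.image hderiv_cont).bddBelow (mem_image_of_mem _ hw))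
    (uIcc_subset_Icc hqν hqμ hq) hqν
  rw [ge_iff_le, sq_abs, hκ]
  simp only [softCdf] at key
  linarith

/-- Uniform local strong monotonicity of the soft quantile map:
`c_s > 0`, `κ = c_s/τ > 0`, and `(F_ν(q) - F_ν(q_ν)) (q - q_ν) ≥ κ |q - q_ν|²`
for every `q` between the soft quantiles `q_ν` and `q_μ`. -/
theorem soft_quantile_strong_monotonicity
    (d : ℕ) (s : ℝ → ℝ)
    (hs_diff : ContDiff ℝ 1 s) (hs_mono : StrictMono s)
    (hs_pos : ∀ z, 0 < s z) (hs_lt1 : ∀ z, s z < 1)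
    (hs_deriv_pos : ∀ z, 0 < deriv s z)
    (hs_bot : Tendsto s atBot (𝓝 0)) (hs_top : Tendsto s atTop (𝓝 1))
    (β τ : ℝ) (hβ : 0 < β ∧ β < 1) (hτ : 0 < τ)
    (L : EuclideanSpace ℝ (Fin d) → ℝ) (hL : Measurable L)
    (Lmin Lmax : ℝ) (hLbd : ∀ x, Lmin ≤ L x ∧ L x ≤ Lmax)
    (zβ : ℝ) (hzβ : s zβ = β)
    (cs κ : ℝ)
    (hcs : cs = sInf (deriv s ''
      Set.Icc (zβ - (Lmax - Lmin) / τ) (zβ + (Lmax - Lmin) / τ)))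
    (hκ : κ = cs / τ) :
    0 < cs ∧ 0 < κ ∧
      ∀ (μ ν : Measure (EuclideanSpace ℝ (Fin d))),
        IsProbabilityMeasure μ → IsProbabilityMeasure ν →
        ∀ qμ qν q : ℝ,
          (∫ x, s ((qμ - L x) / τ) ∂μ = β) →
          (∫ x, s ((qν - L x) / τ) ∂ν = β) →
          q ∈ Set.uIcc qν qμ →
          ((∫ x, s ((q - L x) / τ) ∂ν - β) - (∫ x, s ((qν - L x) / τ) ∂ν - β))
              * (q - qν)
            ≥ κ * |q - qν| ^ 2 :=
  soft_quantile_strong_monotonicity_general d s hs_diff hs_mono hs_pos hs_lt1 hs_deriv_pos β τ hτ L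
    hL Lmin Lmax hLbd zβ hzβ cs κ hcs hκ
end

section
/- Under the standing hypotheses, for every pair of Borel probability measures μ, ν on ℝ^d, the soft β-quantiles satisfy |q_μ − q_ν| ≤ κ⁻¹ · |F_μ(q_ν) − F_ν(q_ν)|. -/
/-!
Each integrand `s ((q - L x) / τ)` is squeezed between `s ((q - Lmax) / τ)` and
`s ((q - Lmin) / τ)`, so every soft quantile of level `β = s zβ` lies in the window
`τ zβ + [Lmin, Lmax]`. For `q` in that window all arguments `(q - L x) / τ` stay in the interval
on which `s' ≥ cs`, so by the mean value theorem `q ↦ F_μ q` grows with slope at least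
`cs / τ = κ` between `qν` and `qμ`; since `F_μ qμ = 0 = F_ν qν`, this is the claimed bound.
-/

open MeasureTheory Filter Topology Set

theorem sInf_deriv_mul_sub_le_sub {s : ℝ → ℝ} (hs : Differentiable ℝ s) {lo hi : ℝ}
    (hbdd : BddBelow (deriv s '' Icc lo hi)) {a b : ℝ} (ha : a ∈ Icc lo hi)
    (hb : b ∈ Icc lo hi) (hba : b ≤ a) :
    sInf (deriv s '' Icc lo hi) * (a - b) ≤ s a - s b :=
  (convex_Icc lo hi).mul_sub_le_image_sub_of_le_deriv hs.continuous.continuousOn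
    hs.differentiableOn (fun _ hx ↦ csInf_le hbdd (mem_image_of_mem _ (interior_subset hx)))
    b hb a ha hba

theorem sub_div_mem_Icc_of_mem_Icc {τ q l Lmin Lmax z : ℝ} (hτ : 0 ≤ τ)
    (hl : l ∈ Icc Lmin Lmax) (hz : z ∈ Icc ((q - Lmax) / τ) ((q - Lmin) / τ)) :
    (q - l) / τ ∈ Icc (z - (Lmax - Lmin) / τ) (z + (Lmax - Lmin) / τ) := by
  have hmax : (Lmax - l) / τ ≤ (Lmax - Lmin) / τ := by gcongr; exact hl.1
  have hmin : (l - Lmin) / τ ≤ (Lmax - Lmin) / τ := by gcongr; exact hl.2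
  have hsplit_max : (q - l) / τ = (q - Lmax) / τ + (Lmax - l) / τ := by ring
  have hsplit_min : (q - l) / τ = (q - Lmin) / τ - (l - Lmin) / τ := by ring
  constructor <;> linarith [hz.1, hz.2]

section SoftQuantile

variable {X : Type*} [MeasurableSpace X] {s : ℝ → ℝ} {τ Lmin Lmax : ℝ} {L : X → ℝ}

theorem Monotone.comp_sub_div_mem_Icc (hs : Monotone s) (hτ : 0 ≤ τ) {l : ℝ}
    (hl : l ∈ Icc Lmin Lmax) (q : ℝ) :
    s ((q - l) / τ) ∈ Icc (s ((q - Lmax) / τ)) (s ((q - Lmin) / τ)) :=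
  ⟨hs (by gcongr; exact hl.2), hs (by gcongr; exact hl.1)⟩

theorem integrable_comp_sub_div (hs : Monotone s) (hτ : 0 ≤ τ) (hL : Measurable L)
    (hLbd : ∀ x, L x ∈ Icc Lmin Lmax) (ρ : Measure X) [IsFiniteMeasure ρ] (q : ℝ) :
    Integrable (fun x ↦ s ((q - L x) / τ)) ρ :=
  .of_mem_Icc _ _ (hs.measurable.comp ((measurable_const.sub hL).div_const τ)).aemeasurable
    (ae_of_all _ fun x ↦ hs.comp_sub_div_mem_Icc hτ (hLbd x) q)

theorem mem_Icc_of_integral_comp_sub_div_eq (hs : StrictMono s) (hτ : 0 ≤ τ)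
    (hL : Measurable L) (hLbd : ∀ x, L x ∈ Icc Lmin Lmax) {ρ : Measure X}
    [IsProbabilityMeasure ρ] {q z : ℝ} (hq : ∫ x, s ((q - L x) / τ) ∂ρ = s z) :
    z ∈ Icc ((q - Lmax) / τ) ((q - Lmin) / τ) := by
  have hint := integrable_comp_sub_div hs.monotone hτ hL hLbd ρ q
  have hlower : s ((q - Lmax) / τ) ≤ s z := by
    simpa [hq] using integral_mono (integrable_const _) hint
      fun x ↦ (hs.monotone.comp_sub_div_mem_Icc hτ (hLbd x) q).1
  have hupper : s z ≤ s ((q - Lmin) / τ) := by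
    simpa [hq] using integral_mono hint (integrable_const _)
      fun x ↦ (hs.monotone.comp_sub_div_mem_Icc hτ (hLbd x) q).2
  exact ⟨hs.le_iff_le.1 hlower, hs.le_iff_le.1 hupper⟩

theorem sInf_deriv_div_mul_sub_le_integral_sub (hs : Monotone s) (hsd : Differentiable ℝ s)
    (hτ : 0 ≤ τ) (hL : Measurable L) (hLbd : ∀ x, L x ∈ Icc Lmin Lmax) (ρ : Measure X)
    [IsProbabilityMeasure ρ] {z a b : ℝ} (ha : z ∈ Icc ((a - Lmax) / τ) ((a - Lmin) / τ))
    (hb : z ∈ Icc ((b - Lmax) / τ) ((b - Lmin) / τ)) (hba : b ≤ a) :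
    sInf (deriv s '' Icc (z - (Lmax - Lmin) / τ) (z + (Lmax - Lmin) / τ)) / τ * (a - b) ≤
      ∫ x, s ((a - L x) / τ) ∂ρ - ∫ x, s ((b - L x) / τ) ∂ρ := by
  set c := sInf (deriv s '' Icc (z - (Lmax - Lmin) / τ) (z + (Lmax - Lmin) / τ))
  have hbdd : BddBelow (deriv s '' Icc (z - (Lmax - Lmin) / τ) (z + (Lmax - Lmin) / τ)) :=
    ⟨0, forall_mem_image.2 fun _ _ ↦ hs.deriv_nonneg⟩
  have hpointwise : ∀ x, c / τ * (a - b) ≤ s ((a - L x) / τ) - s ((b - L x) / τ) := by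
    intro x
    have hslope := sInf_deriv_mul_sub_le_sub hsd hbdd (sub_div_mem_Icc_of_mem_Icc hτ (hLbd x) ha)
      (sub_div_mem_Icc_of_mem_Icc hτ (hLbd x) hb) (by gcongr)
    calc c / τ * (a - b) = c * ((a - L x) / τ - (b - L x) / τ) := by ring
      _ ≤ _ := hslope
  have hint := fun q ↦ integrable_comp_sub_div hs hτ hL hLbd ρ q
  rw [← integral_sub (hint a) (hint b)]
  simpa using integral_mono (integrable_const _) ((hint a).sub (hint b)) hpointwise

theorem sInf_deriv_div_mul_abs_sub_le_abs_integral_sub (hs : Monotone s)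
    (hsd : Differentiable ℝ s) (hτ : 0 ≤ τ) (hL : Measurable L)
    (hLbd : ∀ x, L x ∈ Icc Lmin Lmax) (ρ : Measure X) [IsProbabilityMeasure ρ] {z a b : ℝ}
    (ha : z ∈ Icc ((a - Lmax) / τ) ((a - Lmin) / τ))
    (hb : z ∈ Icc ((b - Lmax) / τ) ((b - Lmin) / τ)) :
    sInf (deriv s '' Icc (z - (Lmax - Lmin) / τ) (z + (Lmax - Lmin) / τ)) / τ * |a - b| ≤
      |∫ x, s ((a - L x) / τ) ∂ρ - ∫ x, s ((b - L x) / τ) ∂ρ| := by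
  rcases le_total b a with hba | hab
  · rw [abs_of_nonneg (sub_nonneg.2 hba)]
    exact (sInf_deriv_div_mul_sub_le_integral_sub hs hsd hτ hL hLbd ρ ha hb hba).trans
      (le_abs_self _)
  · rw [abs_sub_comm a b, abs_of_nonneg (sub_nonneg.2 hab), abs_sub_comm]
    exact (sInf_deriv_div_mul_sub_le_integral_sub hs hsd hτ hL hLbd ρ hb ha hab).trans
      (le_abs_self _)

end SoftQuantile

theorem quantile_inverse_stability_general
    (d : ℕ) (s : ℝ → ℝ)
    (hs_diff : ContDiff ℝ 1 s) (hs_mono : StrictMono s)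
    (β τ : ℝ) (hτ : 0 < τ)
    (L : EuclideanSpace ℝ (Fin d) → ℝ) (hL : Measurable L)
    (Lmin Lmax : ℝ) (hLbd : ∀ x, Lmin ≤ L x ∧ L x ≤ Lmax)
    (zβ : ℝ) (hzβ : s zβ = β)
    (cs κ : ℝ)
    (hcs : cs = sInf (deriv s ''
      Set.Icc (zβ - (Lmax - Lmin) / τ) (zβ + (Lmax - Lmin) / τ)))
    (hκ : κ = cs / τ) (hκpos : 0 < κ)
    (μ ν : Measure (EuclideanSpace ℝ (Fin d)))
    [IsProbabilityMeasure μ] [IsProbabilityMeasure ν]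
    (qμ qν : ℝ)
    (hqμ : ∫ x, s ((qμ - L x) / τ) ∂μ = β)
    (hqν : ∫ x, s ((qν - L x) / τ) ∂ν = β) :
    |qμ - qν| ≤ κ⁻¹ *
      |(∫ x, s ((qν - L x) / τ) ∂μ - β) - (∫ x, s ((qν - L x) / τ) ∂ν - β)| := by
  have hmem : ∀ (ρ : Measure (EuclideanSpace ℝ (Fin d))) [IsProbabilityMeasure ρ] (q : ℝ),
      ∫ x, s ((q - L x) / τ) ∂ρ = β → zβ ∈ Icc ((q - Lmax) / τ) ((q - Lmin) / τ) :=
    fun ρ _ q hq ↦ mem_Icc_of_integral_comp_sub_div_eq hs_mono hτ.le hL hLbd (hq.trans hzβ.symm)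
  have hstab := sInf_deriv_div_mul_abs_sub_le_abs_integral_sub hs_mono.monotone
    (hs_diff.differentiable one_ne_zero) hτ.le hL hLbd μ (hmem μ qμ hqμ) (hmem ν qν hqν)
  rw [← hcs, ← hκ, hqμ] at hstab
  rw [hqν, sub_self, sub_zero, abs_sub_comm _ β, le_inv_mul_iff₀ hκpos]
  exact hstab

/-- Quantile inverse stability:
`|q_μ - q_ν| ≤ κ⁻¹ |F_μ(q_ν) - F_ν(q_ν)|`. -/
theorem quantile_inverse_stability
    (d : ℕ) (s : ℝ → ℝ)
    (hs_diff : ContDiff ℝ 1 s) (hs_mono : StrictMono s)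
    (hs_pos : ∀ z, 0 < s z) (hs_lt1 : ∀ z, s z < 1)
    (hs_deriv_pos : ∀ z, 0 < deriv s z)
    (hs_bot : Tendsto s atBot (𝓝 0)) (hs_top : Tendsto s atTop (𝓝 1))
    (β τ : ℝ) (hβ : 0 < β ∧ β < 1) (hτ : 0 < τ)
    (L : EuclideanSpace ℝ (Fin d) → ℝ) (hL : Measurable L)
    (Lmin Lmax : ℝ) (hLbd : ∀ x, Lmin ≤ L x ∧ L x ≤ Lmax)
    (zβ : ℝ) (hzβ : s zβ = β)
    (cs κ : ℝ)
    (hcs : cs = sInf (deriv s ''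
      Set.Icc (zβ - (Lmax - Lmin) / τ) (zβ + (Lmax - Lmin) / τ)))
    (hκ : κ = cs / τ) (hκpos : 0 < κ)
    (μ ν : Measure (EuclideanSpace ℝ (Fin d)))
    [IsProbabilityMeasure μ] [IsProbabilityMeasure ν]
    (qμ qν : ℝ)
    (hqμ : ∫ x, s ((qμ - L x) / τ) ∂μ = β)
    (hqν : ∫ x, s ((qν - L x) / τ) ∂ν = β) :
    |qμ - qν| ≤ κ⁻¹ *
      |(∫ x, s ((qν - L x) / τ) ∂μ - β) - (∫ x, s ((qν - L x) / τ) ∂ν - β)| :=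
  quantile_inverse_stability_general d s hs_diff hs_mono β τ hτ L hL Lmin Lmax hLbd zβ hzβ cs κ hcs
    hκ hκpos μ ν qμ qν hqμ hqν
end

section
/- Under the standing hypotheses, for every Borel probability measure ρ on ℝ^d with finite fourth moment, the consensus point satisfies ‖m(ρ)‖₂⁴ ≤ β⁻¹ e^{4α(G_max − G_min)} ∫ ‖x‖₂⁴ dρ(x). -/
open MeasureTheory Filter Topology

/-!
The normalising mass `B = ∫ e^{-αG} η dρ` is at least `e^{-αG_max} β` because the weights `η`
integrate to `β`, while `‖A‖ ≤ e^{-αG_min} ∫ η ‖x‖ dρ`. Two applications of the Cauchy–Schwarz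
inequality for the measure `η ρ` give `(∫ η ‖x‖ dρ)⁴ ≤ β³ ∫ η ‖x‖⁴ dρ`, and `η ≤ 1` bounds the
last integral by the fourth moment of `ρ`.
-/

section WeightedMoments

variable {Ω : Type*} [MeasurableSpace Ω] {μ : Measure Ω} {w f : Ω → ℝ}

theorem pow_le_one_add_pow {x : ℝ} (hx : 0 ≤ x) {k n : ℕ} (hkn : k ≤ n) :
    x ^ k ≤ 1 + x ^ n := by
  rcases le_total x 1 with hx1 | hx1
  · linarith [pow_le_one₀ hx hx1 (n := k), pow_nonneg hx n]
  · linarith [pow_le_pow_right₀ hx1 hkn]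

theorem MeasureTheory.Integrable.mul_pow_of_le {k n : ℕ} (hw : 0 ≤ w) (hf : 0 ≤ f)
    (hfm : AEStronglyMeasurable f μ) (hw_int : Integrable w μ)
    (hwfn : Integrable (fun x => w x * f x ^ n) μ) (hkn : k ≤ n) :
    Integrable (fun x => w x * f x ^ k) μ := by
  refine (hw_int.add hwfn).mono' (hw_int.1.mul (hfm.pow k)) (Eventually.of_forall fun x => ?_)
  rw [Real.norm_of_nonneg (mul_nonneg (hw x) (pow_nonneg (hf x) k)), Pi.add_apply, ← mul_one_add]
  exact mul_le_mul_of_nonneg_left (pow_le_one_add_pow (hf x) hkn) (hw x)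

theorem sq_integral_mul_le_integral_mul_integral_mul_sq (hw : 0 ≤ w) (hf : 0 ≤ f)
    (hfm : AEStronglyMeasurable f μ) (hw_int : Integrable w μ)
    (hwf2 : Integrable (fun x => w x * f x ^ 2) μ) :
    (∫ x, w x * f x ∂μ) ^ 2 ≤ (∫ x, w x ∂μ) * ∫ x, w x * f x ^ 2 ∂μ := by
  have hsqrt : AEStronglyMeasurable (fun x => √(w x)) μ :=
    hw_int.1.aemeasurable.sqrt.aestronglyMeasurable
  have hu : MemLp (fun x => √(w x)) (ENNReal.ofReal 2) μ := by
    rw [ENNReal.ofReal_ofNat, memLp_two_iff_integrable_sq hsqrt]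
    simpa only [Real.sq_sqrt (hw _)] using hw_int
  have hv : MemLp (fun x => √(w x) * f x) (ENNReal.ofReal 2) μ := by
    rw [ENNReal.ofReal_ofNat]
    refine (memLp_two_iff_integrable_sq (hsqrt.mul hfm)).2 ?_
    simpa only [Pi.mul_apply, mul_pow, Real.sq_sqrt (hw _)] using hwf2
  have holder := integral_mul_le_Lp_mul_Lq_of_nonneg Real.HolderConjugate.two_two
    (Eventually.of_forall fun x => Real.sqrt_nonneg (w x))
    (Eventually.of_forall fun x => mul_nonneg (Real.sqrt_nonneg (w x)) (hf x)) hu hv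
  simp only [Real.rpow_two, mul_pow, Real.sq_sqrt (hw _), ← mul_assoc,
    Real.mul_self_sqrt (hw _), ← Real.sqrt_eq_rpow, ← Real.sqrt_mul (integral_nonneg hw)] at holder
  exact (Real.le_sqrt (integral_nonneg fun x => mul_nonneg (hw x) (hf x))
    (mul_nonneg (integral_nonneg hw) (integral_nonneg fun x => mul_nonneg (hw x) (sq_nonneg _)))).1
    holder

theorem pow_four_integral_mul_le (hw : 0 ≤ w) (hf : 0 ≤ f)
    (hfm : AEStronglyMeasurable f μ) (hw_int : Integrable w μ)
    (hwf4 : Integrable (fun x => w x * f x ^ 4) μ) :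
    (∫ x, w x * f x ∂μ) ^ 4 ≤ (∫ x, w x ∂μ) ^ 3 * ∫ x, w x * f x ^ 4 ∂μ := by
  have hW : 0 ≤ ∫ x, w x ∂μ := integral_nonneg hw
  have hwf2 := hw_int.mul_pow_of_le hw hf hfm hwf4 (by norm_num : 2 ≤ 4)
  have cs₁ := sq_integral_mul_le_integral_mul_integral_mul_sq hw hf hfm hw_int hwf2
  have cs₂ := sq_integral_mul_le_integral_mul_integral_mul_sq hw (fun x => sq_nonneg (f x))
    (hfm.pow 2) hw_int (by simpa only [← pow_mul] using hwf4)
  simp only [← pow_mul] at cs₂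
  calc (∫ x, w x * f x ∂μ) ^ 4 = ((∫ x, w x * f x ∂μ) ^ 2) ^ 2 := by ring
    _ ≤ ((∫ x, w x ∂μ) * ∫ x, w x * f x ^ 2 ∂μ) ^ 2 := pow_le_pow_left₀ (sq_nonneg _) cs₁ 2
    _ = (∫ x, w x ∂μ) ^ 2 * (∫ x, w x * f x ^ 2 ∂μ) ^ 2 := by ring
    _ ≤ (∫ x, w x ∂μ) ^ 2 * ((∫ x, w x ∂μ) * ∫ x, w x * f x ^ 4 ∂μ) :=
        mul_le_mul_of_nonneg_left cs₂ (pow_nonneg hW 2)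
    _ = (∫ x, w x ∂μ) ^ 3 * ∫ x, w x * f x ^ 4 ∂μ := by ring

theorem mul_integral_le_integral_mul {g η : Ω → ℝ} {c : ℝ} (hc : ∀ x, c ≤ g x) (hη : 0 ≤ η)
    (hη_int : Integrable η μ) (hgη : Integrable (fun x => g x * η x) μ) :
    c * ∫ x, η x ∂μ ≤ ∫ x, g x * η x ∂μ := by
  rw [← integral_const_mul]
  exact integral_mono (hη_int.const_mul c) hgη fun x => mul_le_mul_of_nonneg_right (hc x) (hη x)

end WeightedMoments

section ConsensusPoint

variable {E : Type*} [NormedAddCommGroup E] [NormedSpace ℝ E] [MeasurableSpace E]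
  {μ : Measure E} {g η : E → ℝ}

theorem norm_integral_mul_smul_le {C : ℝ} (hg : ∀ x, ‖g x‖ ≤ C) (hη : 0 ≤ η)
    (hη_int : Integrable (fun x => η x * ‖x‖) μ) :
    ‖∫ x, (g x * η x) • x ∂μ‖ ≤ C * ∫ x, η x * ‖x‖ ∂μ := by
  rw [← integral_const_mul]
  refine norm_integral_le_of_norm_le (hη_int.const_mul C) (Eventually.of_forall fun x => ?_)
  rw [norm_smul, norm_mul, Real.norm_of_nonneg (hη x), mul_assoc]
  exact mul_le_mul_of_nonneg_right (hg x) (mul_nonneg (hη x) (norm_nonneg x))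

theorem norm_weighted_mean_pow_four_le [IsFiniteMeasure μ] [OpensMeasurableSpace E]
    {a b : ℝ} (ha : 0 < a) (hg : ∀ x, a ≤ g x ∧ g x ≤ b) (hη : 0 ≤ η) (hη_le : ∀ x, η x ≤ 1)
    (hg_meas : AEStronglyMeasurable g μ) (hη_meas : AEStronglyMeasurable η μ)
    (hη_pos : 0 < ∫ x, η x ∂μ) (hmom4 : Integrable (fun x => ‖x‖ ^ 4) μ) :
    ‖(∫ x, g x * η x ∂μ)⁻¹ • ∫ x, (g x * η x) • x ∂μ‖ ^ 4
      ≤ (∫ x, η x ∂μ)⁻¹ * (b / a) ^ 4 * ∫ x, ‖x‖ ^ 4 ∂μ := by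
  set β := ∫ x, η x ∂μ
  have hη_norm : ∀ x, ‖η x‖ ≤ 1 := fun x => by rw [Real.norm_of_nonneg (hη x)]; exact hη_le x
  have hg_norm : ∀ x, ‖g x‖ ≤ b := fun x => by
    rw [Real.norm_of_nonneg (ha.le.trans (hg x).1)]; exact (hg x).2
  have hη_int : Integrable η μ := .of_bound hη_meas 1 (Eventually.of_forall hη_norm)
  have hη4 : Integrable (fun x => η x * ‖x‖ ^ 4) μ :=
    hmom4.bdd_mul hη_meas (Eventually.of_forall hη_norm)
  have hη1 : Integrable (fun x => η x * ‖x‖) μ := by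
    simpa only [pow_one] using hη_int.mul_pow_of_le hη (fun x => norm_nonneg x)
      measurable_norm.aestronglyMeasurable hη4 (by norm_num : 1 ≤ 4)
  have hB : a * β ≤ ∫ x, g x * η x ∂μ := mul_integral_le_integral_mul (fun x => (hg x).1) hη
    hη_int (hη_int.bdd_mul hg_meas (Eventually.of_forall hg_norm))
  have hA := norm_integral_mul_smul_le hg_norm hη hη1
  have hM : (∫ x, η x * ‖x‖ ∂μ) ^ 4 ≤ β ^ 3 * ∫ x, ‖x‖ ^ 4 ∂μ := by
    exact (pow_four_integral_mul_le hη (fun x => norm_nonneg x)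
      measurable_norm.aestronglyMeasurable hη_int hη4).trans
      (mul_le_mul_of_nonneg_left (integral_mono hη4 hmom4 fun x =>
      mul_le_of_le_one_left (by positivity) (hη_le x)) (pow_nonneg hη_pos.le 3))
  have haβ : 0 < a * β := mul_pos ha hη_pos
  rw [norm_smul, norm_inv, mul_pow, inv_pow, Real.norm_of_nonneg (haβ.le.trans hB)]
  calc ((∫ x, g x * η x ∂μ) ^ 4)⁻¹ * ‖∫ x, (g x * η x) • x ∂μ‖ ^ 4
      ≤ ((a * β) ^ 4)⁻¹ * (b * ∫ x, η x * ‖x‖ ∂μ) ^ 4 := by gcongr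
    _ ≤ ((a * β) ^ 4)⁻¹ * (b ^ 4 * (β ^ 3 * ∫ x, ‖x‖ ^ 4 ∂μ)) := by
        rw [mul_pow b]; gcongr
    _ = β⁻¹ * (b / a) ^ 4 * ∫ x, ‖x‖ ^ 4 ∂μ := by field_simp

end ConsensusPoint

theorem consensus_moment_stability_general
    (d : ℕ) (s : ℝ → ℝ)
    (hs_cont : Continuous s)
    (hs_pos : ∀ z, 0 < s z) (hs_lt1 : ∀ z, s z < 1)
    (β τ α : ℝ) (hβ : 0 < β ∧ β < 1) (hα : 0 < α)
    (L G : EuclideanSpace ℝ (Fin d) → ℝ) (hL : Measurable L) (hG : Measurable G)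
    (Gmin Gmax : ℝ) (hGbd : ∀ x, Gmin ≤ G x ∧ G x ≤ Gmax)
    (ρ : Measure (EuclideanSpace ℝ (Fin d))) [IsProbabilityMeasure ρ]
    (hmom4 : Integrable (fun x => ‖x‖ ^ 4) ρ)
    (q : ℝ) (hq : ∫ x, s ((q - L x) / τ) ∂ρ = β) :
    ‖(∫ x, Real.exp (-α * G x) * s ((q - L x) / τ) ∂ρ)⁻¹ •
        ∫ x, (Real.exp (-α * G x) * s ((q - L x) / τ)) • x ∂ρ‖ ^ 4
      ≤ β⁻¹ * Real.exp (4 * α * (Gmax - Gmin)) * ∫ x, ‖x‖ ^ 4 ∂ρ := by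
  have hexp_bounds : ∀ x, Real.exp (-α * Gmax) ≤ Real.exp (-α * G x) ∧
      Real.exp (-α * G x) ≤ Real.exp (-α * Gmin) := fun x =>
    ⟨Real.exp_le_exp.2 (by nlinarith [hGbd x]), Real.exp_le_exp.2 (by nlinarith [hGbd x])⟩
  have hexp_ratio : (Real.exp (-α * Gmin) / Real.exp (-α * Gmax)) ^ 4
      = Real.exp (4 * α * (Gmax - Gmin)) := by
    rw [← Real.exp_sub, ← Real.exp_nat_mul]; ring_nf
  have key := norm_weighted_mean_pow_four_le (η := fun x => s ((q - L x) / τ))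
    (Real.exp_pos _) hexp_bounds
    (fun x => (hs_pos _).le) (fun x => (hs_lt1 _).le)
    (hG.const_mul (-α)).exp.aestronglyMeasurable
    (hs_cont.measurable.comp ((measurable_const.sub hL).div_const τ)).aestronglyMeasurable
    (hq ▸ hβ.1) hmom4
  rwa [hq, hexp_ratio] at key

/-- Consensus-moment stability:
`‖m(ρ)‖₂⁴ ≤ β⁻¹ e^{4α(G_max - G_min)} ∫ ‖x‖₂⁴ dρ(x)`. -/
theorem consensus_moment_stability
    (d : ℕ) (s : ℝ → ℝ)
    (hs_cont : Continuous s) (hs_mono : StrictMono s)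
    (hs_pos : ∀ z, 0 < s z) (hs_lt1 : ∀ z, s z < 1)
    (hs_bot : Tendsto s atBot (𝓝 0)) (hs_top : Tendsto s atTop (𝓝 1))
    (β τ α : ℝ) (hβ : 0 < β ∧ β < 1) (hτ : 0 < τ) (hα : 0 < α)
    (L G : EuclideanSpace ℝ (Fin d) → ℝ) (hL : Measurable L) (hG : Measurable G)
    (Gmin Gmax : ℝ) (hGbd : ∀ x, Gmin ≤ G x ∧ G x ≤ Gmax)
    (ρ : Measure (EuclideanSpace ℝ (Fin d))) [IsProbabilityMeasure ρ]
    (hmom4 : Integrable (fun x => ‖x‖ ^ 4) ρ)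
    (q : ℝ) (hq : ∫ x, s ((q - L x) / τ) ∂ρ = β) :
    ‖(∫ x, Real.exp (-α * G x) * s ((q - L x) / τ) ∂ρ)⁻¹ •
        ∫ x, (Real.exp (-α * G x) * s ((q - L x) / τ)) • x ∂ρ‖ ^ 4
      ≤ β⁻¹ * Real.exp (4 * α * (Gmax - Gmin)) * ∫ x, ‖x‖ ^ 4 ∂ρ :=
  consensus_moment_stability_general d s hs_cont hs_pos hs_lt1 β τ α hβ hα L G hL hG Gmin Gmax hGbd
    ρ hmom4 q hq
end

section
/- Under the standing hypotheses, for every N ∈ ℕ and every pair of configurations x = (x¹,…,x^N), y = (y¹,…,y^N) ∈ (ℝ^d)^N, the empirical soft β-quantiles satisfy |Q_N(x) − Q_N(y)| ≤ (L_s L_L)/(κ τ √N) · ‖x − y‖_{N,2}. -/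
open MeasureTheory Filter Topology

/-!
Write `F_ℓ(q) = 𝔼ᵢ s((q - ℓᵢ)/τ)` for the losses `ℓ = L ∘ x`, so that `Q_N(x)` solves
`F_ℓ(q) = β`. Since the losses lie in `[L_min, L_max]`, every such solution lies in
`[L_min + τ z_β, L_max + τ z_β]`, where all arguments of `s` lie in the interval defining `c_s`,
so `F_ℓ' ≥ c_s/τ = κ` there. Hence `κ |Q_N(x) - Q_N(y)| ≤ |F_{L∘x}(Q_N(y)) - F_{L∘y}(Q_N(y))|`,
which is at most `(L_s L_L/τ) 𝔼ᵢ ‖xⁱ - yⁱ‖ ≤ (L_s L_L/τ) ‖x - y‖_{N,2}/√N` by Cauchy–Schwarz.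
-/

open Finset Set
open scoped BigOperators

lemma Finset.expect_le_sqrt_expect_sq {ι : Type*} (t : Finset ι) (f : ι → ℝ) :
    𝔼 i ∈ t, f i ≤ √(𝔼 i ∈ t, f i ^ 2) := by
  rcases t.eq_empty_or_nonempty with rfl | ht
  · simp
  refine Real.le_sqrt_of_sq_le ?_
  simpa [expect_const ht] using expect_mul_sq_le_sq_mul_sq t f 1

lemma Finset.expect_mul_le_mul_sqrt_expect_sq {ι : Type*} (t : Finset ι) {K : ℝ} {a : ι → ℝ}
    (ha : ∀ i ∈ t, 0 ≤ a i) (hKa : ∀ i ∈ t, 0 ≤ K * a i) :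
    𝔼 i ∈ t, K * a i ≤ K * √(𝔼 i ∈ t, a i ^ 2) := by
  rcases le_or_gt 0 K with hK | hK
  · rw [← mul_expect]
    exact mul_le_mul_of_nonneg_left (t.expect_le_sqrt_expect_sq a) hK
  · have ha0 : ∀ i ∈ t, a i = 0 := fun i hi =>
      le_antisymm (nonpos_of_mul_nonneg_right (hKa i hi) hK) (ha i hi)
    rw [expect_eq_zero fun i hi => by rw [ha0 i hi, mul_zero],
      expect_eq_zero fun i hi => by rw [ha0 i hi, sq, mul_zero]]
    simp

lemma mul_abs_sub_le_abs_sub_of_le_deriv {D : Set ℝ} (hD : Convex ℝ D) {f : ℝ → ℝ}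
    (hf : Differentiable ℝ f) {C : ℝ} (hC : ∀ z ∈ D, C ≤ deriv f z) {x y : ℝ}
    (hx : x ∈ D) (hy : y ∈ D) : C * |x - y| ≤ |f x - f y| := by
  wlog hyx : y ≤ x generalizing x y
  · rw [abs_sub_comm, abs_sub_comm (f x)]
    exact this hy hx (le_of_not_ge hyx)
  rw [abs_of_nonneg (sub_nonneg.2 hyx)]
  exact (hD.mul_sub_le_image_sub_of_le_deriv hf.continuous.continuousOn hf.differentiableOn
    (fun z hz => hC z (interior_subset hz)) y hy x hx hyx).trans (le_abs_self _)

lemma sub_div_mem_Icc {a b l q τ z : ℝ} (hτ : 0 < τ) (hl : l ∈ Icc a b)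
    (hq : q ∈ Icc (a + τ * z) (b + τ * z)) :
    (q - l) / τ ∈ Icc (z - (b - a) / τ) (z + (b - a) / τ) := by
  have hlow : z - (b - a) / τ = (τ * z - (b - a)) / τ := by field_simp
  have hupp : z + (b - a) / τ = (τ * z + (b - a)) / τ := by field_simp
  rw [hlow, hupp, Set.mem_Icc, div_le_div_iff_of_pos_right hτ, div_le_div_iff_of_pos_right hτ]
  constructor <;> linarith [hl.1, hl.2, hq.1, hq.2]

/-- The soft cumulative distribution function `q ↦ ∫ s((q - ℓ)/τ) dμ` of the empirical measure
`μ` of the losses `ℓ i`. -/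
noncomputable def empiricalSoftCDF {ι : Type*} [Fintype ι] (s : ℝ → ℝ) (τ : ℝ) (ℓ : ι → ℝ)
    (q : ℝ) : ℝ :=
  𝔼 i, s ((q - ℓ i) / τ)

namespace empiricalSoftCDF

variable {ι : Type*} [Fintype ι] {s : ℝ → ℝ} {τ : ℝ} {ℓ : ι → ℝ}

lemma eq_one_div_mul_sum {N : ℕ} (ℓ : Fin N → ℝ) (q : ℝ) :
    empiricalSoftCDF s τ ℓ q = 1 / (N : ℝ) * ∑ i, s ((q - ℓ i) / τ) := by
  rw [empiricalSoftCDF, Fintype.expect_eq_sum_div_card, Fintype.card_fin, one_div_mul_eq_div]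

lemma mem_Icc [Nonempty ι] (hs : Monotone s) (hτ : 0 < τ) {a b : ℝ}
    (hℓ : ∀ i, ℓ i ∈ Icc a b) (q : ℝ) :
    empiricalSoftCDF s τ ℓ q ∈ Icc (s ((q - b) / τ)) (s ((q - a) / τ)) := by
  constructor
  · refine le_expect univ_nonempty fun i _ => hs ?_
    gcongr
    exact (hℓ i).2
  · refine expect_le univ_nonempty fun i _ => hs ?_
    gcongr
    exact (hℓ i).1

lemma mem_Icc_of_eq [Nonempty ι] (hs : StrictMono s) (hτ : 0 < τ) {a b : ℝ}
    (hℓ : ∀ i, ℓ i ∈ Icc a b) {q z : ℝ} (hq : empiricalSoftCDF s τ ℓ q = s z) :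
    q ∈ Icc (a + τ * z) (b + τ * z) := by
  obtain ⟨hb, ha⟩ := hq ▸ mem_Icc hs.monotone hτ hℓ q
  rw [hs.le_iff_le, div_le_iff₀ hτ] at hb
  rw [hs.le_iff_le, le_div_iff₀ hτ] at ha
  constructor <;> linarith

lemma hasDerivAt (hs : Differentiable ℝ s) (ℓ : ι → ℝ) (q : ℝ) :
    HasDerivAt (empiricalSoftCDF s τ ℓ) (𝔼 i, deriv s ((q - ℓ i) / τ) / τ) q := by
  have hF : empiricalSoftCDF s τ ℓ = fun q => (∑ i, s ((q - ℓ i) / τ)) / Fintype.card ι :=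
    funext fun q => Fintype.expect_eq_sum_div_card _
  rw [hF, Fintype.expect_eq_sum_div_card]
  refine (HasDerivAt.fun_sum fun i _ => ?_).div_const _
  exact ((hs _).hasDerivAt.comp q (((hasDerivAt_id' q).sub_const (ℓ i)).div_const τ)).congr_deriv
    (mul_one_div _ _)

lemma div_le_deriv [Nonempty ι] (hs : Differentiable ℝ s) (hτ : 0 < τ) {c q : ℝ}
    (hc : ∀ i, c ≤ deriv s ((q - ℓ i) / τ)) :
    c / τ ≤ deriv (empiricalSoftCDF s τ ℓ) q := by
  rw [(hasDerivAt hs ℓ q).deriv]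
  exact le_expect univ_nonempty fun i _ => div_le_div_of_nonneg_right (hc i) hτ.le

lemma mul_abs_sub_le [Nonempty ι] (hs : Differentiable ℝ s) (hτ : 0 < τ) {a b : ℝ}
    (hℓ : ∀ i, ℓ i ∈ Icc a b) {z c : ℝ}
    (hc : ∀ w ∈ Icc (z - (b - a) / τ) (z + (b - a) / τ), c ≤ deriv s w) {p q : ℝ}
    (hp : p ∈ Icc (a + τ * z) (b + τ * z)) (hq : q ∈ Icc (a + τ * z) (b + τ * z)) :
    c / τ * |p - q| ≤ |empiricalSoftCDF s τ ℓ p - empiricalSoftCDF s τ ℓ q| :=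
  mul_abs_sub_le_abs_sub_of_le_deriv (convex_Icc _ _)
    (fun r => (hasDerivAt hs ℓ r).differentiableAt)
    (fun _ hr => div_le_deriv hs hτ fun i => hc _ (sub_div_mem_Icc hτ (hℓ i) hr)) hp hq

lemma abs_sub_le {Ls : ℝ} (hLs : ∀ a b, |s a - s b| ≤ Ls * |a - b|) (hτ : 0 < τ)
    (ℓ ℓ' : ι → ℝ) (q : ℝ) :
    |empiricalSoftCDF s τ ℓ q - empiricalSoftCDF s τ ℓ' q| ≤ Ls / τ * 𝔼 i, |ℓ i - ℓ' i| := by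
  rw [empiricalSoftCDF, empiricalSoftCDF, ← expect_sub_distrib, mul_expect]
  refine (abs_expect_le _ _).trans (expect_le_expect fun i _ => (hLs _ _).trans_eq ?_)
  rw [div_sub_div_same, sub_sub_sub_cancel_left, abs_div, abs_of_pos hτ, abs_sub_comm]
  ring

end empiricalSoftCDF

theorem empirical_quantile_lipschitz_general
    (d : ℕ) (s : ℝ → ℝ)
    (hs_diff : ContDiff ℝ 1 s) (hs_mono : StrictMono s)
    (Ls : ℝ) (hLs : ∀ a b : ℝ, |s a - s b| ≤ Ls * |a - b|)
    (β τ : ℝ) (hβ : 0 < β ∧ β < 1) (hτ : 0 < τ)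
    (L : EuclideanSpace ℝ (Fin d) → ℝ)
    (LL : ℝ) (hLlip : ∀ x y, |L x - L y| ≤ LL * ‖x - y‖)
    (Lmin Lmax : ℝ) (hLbd : ∀ x, Lmin ≤ L x ∧ L x ≤ Lmax)
    (zβ : ℝ) (hzβ : s zβ = β)
    (cs κ : ℝ)
    (hcs : cs = sInf (deriv s ''
      Set.Icc (zβ - (Lmax - Lmin) / τ) (zβ + (Lmax - Lmin) / τ)))
    (hκ : κ = cs / τ) (hκpos : 0 < κ)
    (N : ℕ) (x y : Fin N → EuclideanSpace ℝ (Fin d))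
    (Qx Qy : ℝ)
    (hQx : (1 / (N : ℝ)) * ∑ i, s ((Qx - L (x i)) / τ) = β)
    (hQy : (1 / (N : ℝ)) * ∑ i, s ((Qy - L (y i)) / τ) = β) :
    |Qx - Qy| ≤ (Ls * LL) / (κ * τ * Real.sqrt N)
      * Real.sqrt (∑ i, ‖x i - y i‖ ^ 2) := by
  have hN : NeZero N := ⟨by rintro rfl; simp at hQx; exact hβ.1.ne' hQx.symm⟩
  have hs : Differentiable ℝ s := hs_diff.differentiable one_ne_zero
  have hFx : empiricalSoftCDF s τ (L ∘ x) Qx = s zβ := by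
    rw [empiricalSoftCDF.eq_one_div_mul_sum, hzβ, ← hQx]; rfl
  have hFy : empiricalSoftCDF s τ (L ∘ y) Qy = s zβ := by
    rw [empiricalSoftCDF.eq_one_div_mul_sum, hzβ, ← hQy]; rfl
  have hLx : ∀ i, (L ∘ x) i ∈ Icc Lmin Lmax := fun i => hLbd (x i)
  have hLy : ∀ i, (L ∘ y) i ∈ Icc Lmin Lmax := fun i => hLbd (y i)
  have hcs_le : ∀ w ∈ Icc (zβ - (Lmax - Lmin) / τ) (zβ + (Lmax - Lmin) / τ), cs ≤ deriv s w :=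
    fun w hw => hcs ▸ csInf_le (isCompact_Icc.bddBelow_image
      (hs_diff.continuous_deriv le_rfl).continuousOn) ⟨w, hw, rfl⟩
  have hLs0 : 0 ≤ Ls := by simpa using (abs_nonneg _).trans (hLs 1 0)
  have hgap : κ * |Qx - Qy| ≤ Ls / τ * (LL * √(𝔼 i, ‖x i - y i‖ ^ 2)) :=
    calc κ * |Qx - Qy|
        ≤ |empiricalSoftCDF s τ (L ∘ x) Qx - empiricalSoftCDF s τ (L ∘ x) Qy| :=
          hκ ▸ empiricalSoftCDF.mul_abs_sub_le hs hτ hLx hcs_le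
            (empiricalSoftCDF.mem_Icc_of_eq hs_mono hτ hLx hFx)
            (empiricalSoftCDF.mem_Icc_of_eq hs_mono hτ hLy hFy)
      _ = |empiricalSoftCDF s τ (L ∘ y) Qy - empiricalSoftCDF s τ (L ∘ x) Qy| := by rw [hFx, hFy]
      _ ≤ Ls / τ * 𝔼 i, |L (y i) - L (x i)| := empiricalSoftCDF.abs_sub_le hLs hτ _ _ _
      _ ≤ Ls / τ * 𝔼 i, LL * ‖x i - y i‖ := by
          gcongr with i
          rw [abs_sub_comm]
          exact hLlip _ _
      _ ≤ Ls / τ * (LL * √(𝔼 i, ‖x i - y i‖ ^ 2)) := by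
          gcongr
          exact expect_mul_le_mul_sqrt_expect_sq _ (fun i _ => norm_nonneg _)
            fun i _ => (abs_nonneg _).trans (hLlip _ _)
  rw [Fintype.expect_eq_sum_div_card, Fintype.card_fin, Real.sqrt_div' _ (Nat.cast_nonneg N)]
    at hgap
  rw [← mul_le_mul_iff_of_pos_left hκpos]
  refine hgap.trans_eq ?_
  have hsqrtN : 0 < √(N : ℝ) := Real.sqrt_pos.2 (Nat.cast_pos.2 (Nat.pos_of_neZero N))
  field_simp

/-- Global Lipschitz property of the empirical soft quantile map:
`|Q_N(x) - Q_N(y)| ≤ (L_s L_L)/(κ τ √N) ‖x - y‖_{N,2}`. -/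
theorem empirical_quantile_lipschitz
    (d : ℕ) (s : ℝ → ℝ)
    (hs_diff : ContDiff ℝ 1 s) (hs_mono : StrictMono s)
    (hs_pos : ∀ z, 0 < s z) (hs_lt1 : ∀ z, s z < 1)
    (hs_deriv_pos : ∀ z, 0 < deriv s z)
    (hs_bot : Tendsto s atBot (𝓝 0)) (hs_top : Tendsto s atTop (𝓝 1))
    (Ls : ℝ) (hLs : ∀ a b : ℝ, |s a - s b| ≤ Ls * |a - b|)
    (β τ : ℝ) (hβ : 0 < β ∧ β < 1) (hτ : 0 < τ)
    (L : EuclideanSpace ℝ (Fin d) → ℝ)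
    (LL : ℝ) (hLlip : ∀ x y, |L x - L y| ≤ LL * ‖x - y‖)
    (Lmin Lmax : ℝ) (hLbd : ∀ x, Lmin ≤ L x ∧ L x ≤ Lmax)
    (zβ : ℝ) (hzβ : s zβ = β)
    (cs κ : ℝ)
    (hcs : cs = sInf (deriv s ''
      Set.Icc (zβ - (Lmax - Lmin) / τ) (zβ + (Lmax - Lmin) / τ)))
    (hκ : κ = cs / τ) (hκpos : 0 < κ)
    (N : ℕ) (x y : Fin N → EuclideanSpace ℝ (Fin d))
    (Qx Qy : ℝ)
    (hQx : (1 / (N : ℝ)) * ∑ i, s ((Qx - L (x i)) / τ) = β)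
    (hQy : (1 / (N : ℝ)) * ∑ i, s ((Qy - L (y i)) / τ) = β) :
    |Qx - Qy| ≤ (Ls * LL) / (κ * τ * Real.sqrt N)
      * Real.sqrt (∑ i, ‖x i - y i‖ ^ 2) :=
  empirical_quantile_lipschitz_general d s hs_diff hs_mono Ls hLs β τ hβ hτ L LL hLlip Lmin Lmax
    hLbd zβ hzβ cs κ hcs hκ hκpos N x y Qx Qy hQx hQy
end

section
/- Under the standing hypotheses, for every N ∈ ℕ and every R > 0 there exists a finite constant C > 0 such that for all configurations x, y ∈ (ℝ^d)^N with ‖x‖_{N,2} ≤ R and ‖y‖_{N,2} ≤ R, the empirical consensus points satisfy ‖𝔪_N(x) − 𝔪_N(y)‖₂ ≤ C ‖x − y‖_{N,2}. -/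
open MeasureTheory Filter Topology

open Finset hiding Icc Ioo

open Set Real

/-!
Every soft quantile lies in a fixed compact window, because the average of `s` is pinned at `β`;
on the corresponding window of arguments `s'` is bounded below by some `c > 0`. Subtracting the
quantile equations of two configurations then gives `N c |Q_x - Q_y| ≤ Ls Σ |L(xⁱ) - L(yⁱ)|`, so
the weights `e^{-αG(xⁱ)} η(xⁱ)` move by `O(Σ ‖xⁱ - yⁱ‖)` in total while staying above a positive
constant. A weighted mean with weights bounded below is Lipschitz in its points (of norm at most
`R`) and in its weights, and the `ℓ¹` distance is at most `√N` times the `ℓ²` distance.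
-/

theorem exists_pos_mul_sub_le_sub_of_deriv_pos {f : ℝ → ℝ} (hf : ContDiff ℝ 1 f)
    (hf' : ∀ x, 0 < deriv f x) (a b : ℝ) :
    ∃ c > 0, ∀ u ∈ Icc a b, ∀ v ∈ Icc a b, u ≤ v → c * (v - u) ≤ f v - f u := by
  obtain ⟨c, hc, hcle⟩ := isCompact_Icc.exists_forall_le'
    (hf.continuous_deriv le_rfl).continuousOn fun x _ => hf' x
  exact ⟨c, hc, (convex_Icc a b).mul_sub_le_image_sub_of_le_deriv hf.continuous.continuousOn
    (hf.differentiable one_ne_zero).differentiableOn fun x hx => hcle x (interior_subset hx)⟩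

theorem deriv_comp_div_const_pos {f : ℝ → ℝ} (hf : Differentiable ℝ f)
    (hf' : ∀ x, 0 < deriv f x) {τ : ℝ} (hτ : 0 < τ) (t : ℝ) :
    0 < deriv (fun t => f (t / τ)) t := by
  have h : HasDerivAt (fun t => f (t / τ)) (deriv f (t / τ) * (1 / τ)) t :=
    (hf _).hasDerivAt.comp t ((hasDerivAt_id' t).div_const τ)
  rw [h.deriv]
  exact mul_pos (hf' _) (one_div_pos.2 hτ)

theorem LipschitzWith.of_abs_sub_le_mul_norm {E : Type*} [SeminormedAddCommGroup E]
    {f : E → ℝ} {K : ℝ} (h : ∀ x y, |f x - f y| ≤ K * ‖x - y‖) :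
    LipschitzWith K.toNNReal f :=
  .of_dist_le' fun x y => by simpa only [dist_eq_norm, Real.norm_eq_abs] using h x y

theorem LipschitzWith.comp_div_const {f : ℝ → ℝ} {K : NNReal} (hf : LipschitzWith K f)
    (τ : ℝ) : LipschitzWith (K * ‖τ⁻¹‖₊) fun t => f (t / τ) := by
  simpa only [Function.comp_def, smul_eq_mul, div_eq_inv_mul, mul_comm]
    using hf.comp (lipschitzWith_smul τ⁻¹)

theorem abs_exp_sub_exp_le {p p' M : ℝ} (hp : p ≤ M) (hp' : p' ≤ M) :
    |exp p - exp p'| ≤ exp M * |p - p'| := by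
  simpa [Real.norm_eq_abs] using (convex_Iic M).norm_image_sub_le_of_norm_deriv_le
    (f := exp) (fun _ _ => differentiableAt_exp) (fun z hz => by simpa using hz) hp' hp

theorem abs_exp_mul_sub_exp_mul_le {p p' q q' M : ℝ} (hp : p ≤ M) (hp' : p' ≤ M)
    (hq : |q| ≤ 1) : |exp p * q - exp p' * q'| ≤ exp M * (|p - p'| + |q - q'|) := by
  calc |exp p * q - exp p' * q'| = |(exp p - exp p') * q + exp p' * (q - q')| := by ring_nf
    _ ≤ |exp p - exp p'| * |q| + exp p' * |q - q'| :=
        (abs_add_le _ _).trans_eq (by rw [abs_mul, abs_mul, abs_of_pos (exp_pos p')])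
    _ ≤ exp M * |p - p'| * 1 + exp M * |q - q'| := by
        gcongr
        exact abs_exp_sub_exp_le hp hp'
    _ = exp M * (|p - p'| + |q - q'|) := by ring

section Sums

variable {ι E : Type*} [Fintype ι] [SeminormedAddCommGroup E] (z : ι → E)

theorem norm_le_sqrt_sum_sq (i : ι) : ‖z i‖ ≤ √(∑ j, ‖z j‖ ^ 2) :=
  Real.le_sqrt_of_sq_le (single_le_sum (fun j _ => sq_nonneg ‖z j‖) (mem_univ i))

theorem sum_norm_le_sqrt_card_mul_sqrt_sum_sq :
    ∑ i, ‖z i‖ ≤ √(Fintype.card ι) * √(∑ i, ‖z i‖ ^ 2) := by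
  simpa using Real.sum_mul_le_sqrt_mul_sqrt univ (fun _ => 1) (fun i => ‖z i‖)

end Sums

theorem Finset.centerMass_sub_centerMass {R ι E : Type*} [Field R] [AddCommGroup E] [Module R E]
    (t : Finset ι) {w w' : ι → R} (hw : ∑ i ∈ t, w i ≠ 0) (hw' : ∑ i ∈ t, w' i ≠ 0)
    (x y : ι → E) :
    t.centerMass w x - t.centerMass w' y = (∑ i ∈ t, w i)⁻¹ •
      ∑ i ∈ t, (w i • (x i - y i) + (w i - w' i) • (y i - t.centerMass w' y)) := by
  set p := t.centerMass w' y
  have hp : ∑ i ∈ t, w' i • (y i - p) = 0 := by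
    simp only [smul_sub, sum_sub_distrib, ← sum_smul, p, centerMass, smul_inv_smul₀ hw', sub_self]
  have hterm : ∀ i, w i • (x i - y i) + (w i - w' i) • (y i - p) =
      (w i • x i - w i • p) - w' i • (y i - p) := fun i => by
    simp only [smul_sub, sub_smul]; abel
  rw [sum_congr rfl fun i _ => hterm i, sum_sub_distrib, hp, sub_zero, sum_sub_distrib,
    ← sum_smul, smul_sub, inv_smul_smul₀ hw]
  rfl

theorem Finset.norm_centerMass_sub_centerMass_le {ι E : Type*} [Fintype ι] [Nonempty ι]
    [NormedAddCommGroup E] [NormedSpace ℝ E] {w w' : ι → ℝ} {x y : ι → E} {m R : ℝ}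
    (hm : 0 < m) (hw : ∀ i, m ≤ w i) (hw' : ∀ i, m ≤ w' i) (hy : ∀ i, ‖y i‖ ≤ R) :
    ‖univ.centerMass w x - univ.centerMass w' y‖ ≤
      ∑ i, ‖x i - y i‖ + 2 * R / m * ∑ i, |w i - w' i| := by
  set B := ∑ i, w i
  set p := univ.centerMass w' y
  have hw_le : ∀ i, w i ≤ B := fun i =>
    single_le_sum (fun j _ => hm.le.trans (hw j)) (mem_univ i)
  have hmB : m ≤ B := (hw (Classical.arbitrary ι)).trans (hw_le _)
  have hB : 0 < B := hm.trans_le hmB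
  have hB' : 0 < ∑ i, w' i := sum_pos (fun i _ => hm.trans_le (hw' i)) univ_nonempty
  have hp : ‖p‖ ≤ R := mem_closedBall_zero_iff.1 <| (convex_closedBall 0 R).centerMass_mem
    (fun i _ => hm.le.trans (hw' i)) hB' (fun i _ => mem_closedBall_zero_iff.2 (hy i))
  rw [centerMass_sub_centerMass _ hB.ne' hB'.ne', smul_sum, mul_sum, ← sum_add_distrib]
  refine (norm_sum_le _ _).trans (sum_le_sum fun i _ => ?_)
  calc ‖B⁻¹ • (w i • (x i - y i) + (w i - w' i) • (y i - p))‖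
      ≤ B⁻¹ * (w i * ‖x i - y i‖ + |w i - w' i| * (R + R)) := by
        rw [norm_smul, Real.norm_of_nonneg (inv_nonneg.2 hB.le)]
        refine mul_le_mul_of_nonneg_left ((norm_add_le _ _).trans ?_) (inv_nonneg.2 hB.le)
        rw [norm_smul, norm_smul, Real.norm_of_nonneg (hm.le.trans (hw i)), Real.norm_eq_abs]
        gcongr
        exact (norm_sub_le _ _).trans (add_le_add (hy i) hp)
    _ = B⁻¹ * w i * ‖x i - y i‖ + B⁻¹ * (|w i - w' i| * (R + R)) := by ring
    _ ≤ 1 * ‖x i - y i‖ + m⁻¹ * (|w i - w' i| * (R + R)) := by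
        have hR : 0 ≤ R := (norm_nonneg _).trans (hy i)
        gcongr
        exact inv_mul_le_one_of_le₀ (hw_le i) hB.le
    _ = ‖x i - y i‖ + 2 * R / m * |w i - w' i| := by ring

section SoftQuantile

variable {ι : Type*} [Fintype ι] {σ : ℝ → ℝ} {β : ℝ} {ℓ ℓ' : ι → ℝ} {Q Q' : ℝ}

/-- In the paper `σ t = s (t / τ)`. -/
def IsSoftQuantile (σ : ℝ → ℝ) (β : ℝ) (ℓ : ι → ℝ) (Q : ℝ) : Prop :=
  (Fintype.card ι : ℝ)⁻¹ * ∑ i, σ (Q - ℓ i) = β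

theorem IsSoftQuantile.nonempty (hQ : IsSoftQuantile σ β ℓ Q) (hβ : β ≠ 0) : Nonempty ι := by
  refine Fintype.card_pos_iff.1 (Nat.pos_of_ne_zero fun hcard => hβ ?_)
  rw [← hQ, hcard, Nat.cast_zero, inv_zero, zero_mul]

theorem IsSoftQuantile.sum_eq [Nonempty ι] (hQ : IsSoftQuantile σ β ℓ Q) :
    ∑ i, σ (Q - ℓ i) = ∑ _i : ι, β := by
  rw [sum_const, card_univ, nsmul_eq_mul, ← hQ,
    mul_inv_cancel_left₀ (Nat.cast_ne_zero.2 Fintype.card_ne_zero)]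

theorem IsSoftQuantile.mem_Icc [Nonempty ι] (hQ : IsSoftQuantile σ β ℓ Q) (hσ : Monotone σ)
    {a b lo hi : ℝ} (ha : σ a < β) (hb : β < σ b) (hℓ : ∀ i, ℓ i ∈ Icc lo hi) :
    Q ∈ Icc (lo + a) (hi + b) := by
  obtain ⟨i, -, hi⟩ := exists_le_of_sum_le univ_nonempty hQ.sum_eq.ge
  obtain ⟨j, -, hj⟩ := exists_le_of_sum_le univ_nonempty hQ.sum_eq.le
  have := hσ.reflect_lt (ha.trans_le hi)
  have := hσ.reflect_lt (hj.trans_lt hb)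
  constructor <;> linarith [(hℓ i).1, (hℓ j).2]

theorem IsSoftQuantile.card_mul_abs_sub_le [Nonempty ι] (hQ : IsSoftQuantile σ β ℓ Q)
    (hQ' : IsSoftQuantile σ β ℓ' Q') (hσ : Monotone σ) {K : NNReal} (hσK : LipschitzWith K σ)
    {a b c lo hi : ℝ} (ha : σ a < β) (hb : β < σ b)
    (hslope : ∀ u ∈ Icc (lo + a - hi) (hi + b - lo), ∀ v ∈ Icc (lo + a - hi) (hi + b - lo),
      u ≤ v → c * (v - u) ≤ σ v - σ u)
    (hℓ : ∀ i, ℓ i ∈ Icc lo hi) (hℓ' : ∀ i, ℓ' i ∈ Icc lo hi) :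
    Fintype.card ι * c * |Q - Q'| ≤ K * ∑ i, |ℓ i - ℓ' i| := by
  wlog hle : Q ≤ Q' generalizing ℓ ℓ' Q Q'
  · simpa only [abs_sub_comm] using this hQ' hQ hℓ' hℓ (le_of_not_ge hle)
  have hQ_mem := hQ.mem_Icc hσ ha hb hℓ
  have hQ'_mem := hQ'.mem_Icc hσ ha hb hℓ'
  have hwindow : ∀ q ∈ Icc (lo + a) (hi + b), ∀ l ∈ Icc lo hi,
      q - l ∈ Icc (lo + a - hi) (hi + b - lo) := fun q hq l hl =>
    ⟨by linarith [hq.1, hl.2], by linarith [hq.2, hl.1]⟩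
  have hgrowth : ∀ i, c * (Q' - Q) ≤ σ (Q' - ℓ' i) - σ (Q - ℓ' i) := fun i => by
    simpa using hslope _ (hwindow Q hQ_mem _ (hℓ' i)) _ (hwindow Q' hQ'_mem _ (hℓ' i))
      (by linarith)
  have hlip : ∀ i, σ (Q - ℓ i) - σ (Q - ℓ' i) ≤ K * |ℓ i - ℓ' i| := fun i => by
    have := hσK.dist_le_mul (Q - ℓ i) (Q - ℓ' i)
    rw [Real.dist_eq, Real.dist_eq, sub_sub_sub_cancel_left, abs_sub_comm (ℓ' i)] at this
    exact (le_abs_self _).trans this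
  calc Fintype.card ι * c * |Q - Q'| = ∑ _i : ι, c * (Q' - Q) := by
        rw [abs_sub_comm, abs_of_nonneg (sub_nonneg.2 hle), sum_const, card_univ, nsmul_eq_mul]
        ring
    _ ≤ ∑ i, (σ (Q' - ℓ' i) - σ (Q - ℓ' i)) := sum_le_sum fun i _ => hgrowth i
    _ = ∑ i, (σ (Q - ℓ i) - σ (Q - ℓ' i)) := by
        rw [sum_sub_distrib, sum_sub_distrib, hQ.sum_eq, hQ'.sum_eq]
    _ ≤ ∑ i, K * |ℓ i - ℓ' i| := sum_le_sum fun i _ => hlip i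
    _ = K * ∑ i, |ℓ i - ℓ' i| := (mul_sum _ _ _).symm

end SoftQuantile

section ConsensusWeight

variable {E : Type*} {σ : ℝ → ℝ} {α β Gmin Gmax : ℝ} {L G : E → ℝ}

noncomputable def consensusWeight (σ : ℝ → ℝ) (α : ℝ) (L G : E → ℝ) (Q : ℝ) (u : E) : ℝ :=
  exp (-α * G u) * σ (Q - L u)

theorem abs_consensusWeight_sub_le [PseudoMetricSpace E] (hσ : ∀ t, σ t ∈ Ioo 0 1)
    {Kσ KL KG : NNReal} (hσK : LipschitzWith Kσ σ) (hLK : LipschitzWith KL L)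
    (hGK : LipschitzWith KG G) (hα : 0 ≤ α) (hG : ∀ u, Gmin ≤ G u) (Q Q' : ℝ) (u v : E) :
    |consensusWeight σ α L G Q u - consensusWeight σ α L G Q' v| ≤
      exp (-α * Gmin) * ((α * KG + Kσ * KL) * dist u v + Kσ * |Q - Q'|) := by
  have hσ1 : |σ (Q - L u)| ≤ 1 := abs_le.2 ⟨by linarith [(hσ (Q - L u)).1], (hσ _).2.le⟩
  refine (abs_exp_mul_sub_exp_mul_le (M := -α * Gmin) (by nlinarith [hG u]) (by nlinarith [hG v])
    hσ1).trans ?_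
  have hGuv : |-α * G u - -α * G v| ≤ α * (KG * dist u v) := by
    rw [show -α * G u - -α * G v = -(α * (G u - G v)) by ring, abs_neg, abs_mul,
      abs_of_nonneg hα, ← Real.dist_eq]
    gcongr
    exact hGK.dist_le_mul u v
  have hσuv : |σ (Q - L u) - σ (Q' - L v)| ≤ Kσ * (|Q - Q'| + KL * dist u v) := by
    rw [← Real.dist_eq]
    refine (hσK.dist_le_mul _ _).trans ?_
    rw [Real.dist_eq, sub_sub_sub_comm]
    gcongr
    refine (abs_sub _ _).trans ?_
    gcongr
    simpa only [Real.dist_eq] using hLK.dist_le_mul u v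
  calc exp (-α * Gmin) * (|-α * G u - -α * G v| + |σ (Q - L u) - σ (Q' - L v)|)
      ≤ exp (-α * Gmin) * (α * (KG * dist u v) + Kσ * (|Q - Q'| + KL * dist u v)) :=
        mul_le_mul_of_nonneg_left (add_le_add hGuv hσuv) (exp_pos _).le
    _ = _ := by ring

variable {ι : Type*} [Fintype ι] {x y : ι → E} {Q Q' a b c lo hi : ℝ}

theorem IsSoftQuantile.le_consensusWeight [Nonempty ι] (hQ : IsSoftQuantile σ β (L ∘ x) Q)
    (hσmono : Monotone σ) (hσ : ∀ t, σ t ∈ Ioo 0 1) (ha : σ a < β) (hb : β < σ b)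
    (hα : 0 ≤ α) (hL : ∀ u, L u ∈ Icc lo hi) (hG : ∀ u, G u ≤ Gmax) (u : E) :
    exp (-α * Gmax) * σ (lo + a - hi) ≤ consensusWeight σ α L G Q u := by
  have hQ_mem := hQ.mem_Icc hσmono ha hb fun i => hL (x i)
  exact mul_le_mul (exp_le_exp.2 (by nlinarith [hG u]))
    (hσmono (by linarith [hQ_mem.1, (hL u).2])) (hσ _).1.le (exp_pos _).le

theorem IsSoftQuantile.sum_abs_consensusWeight_sub_le [PseudoMetricSpace E] [Nonempty ι]
    (hQ : IsSoftQuantile σ β (L ∘ x) Q) (hQ' : IsSoftQuantile σ β (L ∘ y) Q')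
    (hσmono : Monotone σ) (hσ : ∀ t, σ t ∈ Ioo 0 1)
    {Kσ KL KG : NNReal} (hσK : LipschitzWith Kσ σ) (hLK : LipschitzWith KL L)
    (hGK : LipschitzWith KG G) (ha : σ a < β) (hb : β < σ b) (hc : 0 < c)
    (hslope : ∀ u ∈ Icc (lo + a - hi) (hi + b - lo), ∀ v ∈ Icc (lo + a - hi) (hi + b - lo),
      u ≤ v → c * (v - u) ≤ σ v - σ u)
    (hα : 0 ≤ α) (hL : ∀ u, L u ∈ Icc lo hi) (hG : ∀ u, Gmin ≤ G u) :
    ∑ i, |consensusWeight σ α L G Q (x i) - consensusWeight σ α L G Q' (y i)| ≤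
      exp (-α * Gmin) * (α * KG + Kσ * KL + Kσ * (Kσ * KL / c)) * ∑ i, dist (x i) (y i) := by
  set D := ∑ i, dist (x i) (y i)
  have hLD : ∑ i, |L (x i) - L (y i)| ≤ KL * D := by
    rw [mul_sum]
    exact sum_le_sum fun i _ => by simpa only [Real.dist_eq] using hLK.dist_le_mul (x i) (y i)
  have hQQ : Fintype.card ι * |Q - Q'| ≤ Kσ * KL * D / c := by
    have := hQ.card_mul_abs_sub_le hQ' hσmono hσK ha hb hslope (fun i => hL _) (fun i => hL _)
    rw [le_div_iff₀ hc, mul_assoc (Kσ : ℝ)]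
    calc _ = Fintype.card ι * c * |Q - Q'| := by ring
      _ ≤ _ := this.trans (by gcongr; exact hLD)
  calc _ ≤ ∑ i, exp (-α * Gmin) * ((α * KG + Kσ * KL) * dist (x i) (y i) + Kσ * |Q - Q'|) :=
        sum_le_sum fun i _ => abs_consensusWeight_sub_le hσ hσK hLK hGK hα hG _ _ _ _
    _ = exp (-α * Gmin) * ((α * KG + Kσ * KL) * D + Kσ * (Fintype.card ι * |Q - Q'|)) := by
        rw [← mul_sum, sum_add_distrib, ← mul_sum, sum_const, card_univ, nsmul_eq_mul]
        ring
    _ ≤ exp (-α * Gmin) * ((α * KG + Kσ * KL) * D + Kσ * (Kσ * KL * D / c)) := by gcongr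
    _ = _ := by ring

theorem exists_norm_centerMass_consensusWeight_sub_le [NormedAddCommGroup E] [NormedSpace ℝ E]
    (hσmono : Monotone σ) (hσ : ∀ t, σ t ∈ Ioo 0 1) {Kσ KL KG : NNReal}
    (hσK : LipschitzWith Kσ σ) (hσ_bot : ∃ a, σ a < β) (hσ_top : ∃ b, β < σ b)
    (hσ_slope : ∀ a b, ∃ c > 0, ∀ u ∈ Icc a b, ∀ v ∈ Icc a b, u ≤ v → c * (v - u) ≤ σ v - σ u)
    (hLK : LipschitzWith KL L) (hGK : LipschitzWith KG G) (hL : ∀ u, L u ∈ Icc lo hi)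
    (hG : ∀ u, G u ∈ Icc Gmin Gmax) (hα : 0 ≤ α) (hβ : β ≠ 0) {R : ℝ} (hR : 0 ≤ R) :
    ∃ C ≥ 0, ∀ (x y : ι → E) (Q Q' : ℝ), IsSoftQuantile σ β (L ∘ x) Q →
      IsSoftQuantile σ β (L ∘ y) Q' → (∀ i, ‖y i‖ ≤ R) →
      ‖univ.centerMass (fun i => consensusWeight σ α L G Q (x i)) x -
          univ.centerMass (fun i => consensusWeight σ α L G Q' (y i)) y‖ ≤
        C * ∑ i, ‖x i - y i‖ := by
  obtain ⟨a, ha⟩ := hσ_bot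
  obtain ⟨b, hb⟩ := hσ_top
  obtain ⟨c, hc, hslope⟩ := hσ_slope (lo + a - hi) (hi + b - lo)
  set m := exp (-α * Gmax) * σ (lo + a - hi)
  set K := exp (-α * Gmin) * (α * KG + Kσ * KL + Kσ * (Kσ * KL / c))
  have hm : 0 < m := mul_pos (exp_pos _) (hσ _).1
  refine ⟨1 + 2 * R / m * K, by positivity, fun x y Q Q' hQ hQ' hy => ?_⟩
  have := hQ.nonempty hβ
  have hw := hQ.sum_abs_consensusWeight_sub_le hQ' hσmono hσ hσK hLK hGK ha hb hc.lt hslope hα hL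
    fun u => (hG u).1
  simp only [dist_eq_norm] at hw
  refine (norm_centerMass_sub_centerMass_le hm
    (fun i => hQ.le_consensusWeight hσmono hσ ha hb hα hL (fun u => (hG u).2) (x i))
    (fun i => hQ'.le_consensusWeight hσmono hσ ha hb hα hL (fun u => (hG u).2) (y i)) hy).trans ?_
  calc _ ≤ ∑ i, ‖x i - y i‖ + 2 * R / m * (K * ∑ i, ‖x i - y i‖) := by gcongr
    _ = (1 + 2 * R / m * K) * ∑ i, ‖x i - y i‖ := by ring

end ConsensusWeight

/-- Local Lipschitz continuity of the empirical consensus map: for every `N` and every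
`R > 0` there is a finite constant `C > 0` with
`‖𝔪_N(x) - 𝔪_N(y)‖ ≤ C ‖x - y‖_{N,2}` on the product ball of radius `R`. -/
theorem empirical_consensus_local_lipschitz
    (d : ℕ) (s : ℝ → ℝ)
    (hs_diff : ContDiff ℝ 1 s) (hs_mono : StrictMono s)
    (hs_pos : ∀ z, 0 < s z) (hs_lt1 : ∀ z, s z < 1)
    (hs_deriv_pos : ∀ z, 0 < deriv s z)
    (hs_bot : Tendsto s atBot (𝓝 0)) (hs_top : Tendsto s atTop (𝓝 1))
    (Ls : ℝ) (hLs : ∀ a b : ℝ, |s a - s b| ≤ Ls * |a - b|)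
    (β τ α : ℝ) (hβ : 0 < β ∧ β < 1) (hτ : 0 < τ) (hα : 0 < α)
    (L G : EuclideanSpace ℝ (Fin d) → ℝ)
    (LL : ℝ) (hLlip : ∀ x y, |L x - L y| ≤ LL * ‖x - y‖)
    (LG : ℝ) (hGlip : ∀ x y, |G x - G y| ≤ LG * ‖x - y‖)
    (Lmin Lmax : ℝ) (hLbd : ∀ x, Lmin ≤ L x ∧ L x ≤ Lmax)
    (Gmin Gmax : ℝ) (hGbd : ∀ x, Gmin ≤ G x ∧ G x ≤ Gmax)
    (N : ℕ) (R : ℝ) (hR : 0 < R) :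
    ∃ C : ℝ, 0 < C ∧
      ∀ (x y : Fin N → EuclideanSpace ℝ (Fin d)) (Qx Qy : ℝ),
        Real.sqrt (∑ i, ‖x i‖ ^ 2) ≤ R →
        Real.sqrt (∑ i, ‖y i‖ ^ 2) ≤ R →
        ((1 / (N : ℝ)) * ∑ i, s ((Qx - L (x i)) / τ) = β) →
        ((1 / (N : ℝ)) * ∑ i, s ((Qy - L (y i)) / τ) = β) →
        ‖(∑ i, Real.exp (-α * G (x i)) * s ((Qx - L (x i)) / τ))⁻¹ •
              (∑ i, (Real.exp (-α * G (x i)) * s ((Qx - L (x i)) / τ)) • x i)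
          - (∑ i, Real.exp (-α * G (y i)) * s ((Qy - L (y i)) / τ))⁻¹ •
              (∑ i, (Real.exp (-α * G (y i)) * s ((Qy - L (y i)) / τ)) • y i)‖
          ≤ C * Real.sqrt (∑ i, ‖x i - y i‖ ^ 2) := by
  set σ : ℝ → ℝ := fun t => s (t / τ)
  have hσmono : Monotone σ :=
    hs_mono.monotone.comp fun u v huv => div_le_div_of_nonneg_right huv hτ.le
  have hσ_bot : ∃ a, σ a < β :=
    ((hs_bot.comp (tendsto_id.atBot_div_const hτ)).eventually (gt_mem_nhds hβ.1)).exists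
  have hσ_top : ∃ b, β < σ b :=
    ((hs_top.comp (tendsto_id.atTop_div_const hτ)).eventually (lt_mem_nhds hβ.2)).exists
  have hσ_slope := exists_pos_mul_sub_le_sub_of_deriv_pos (hs_diff.comp (contDiff_id.div_const τ))
    (deriv_comp_div_const_pos (hs_diff.differentiable one_ne_zero) hs_deriv_pos hτ)
  obtain ⟨C, hC, hCxy⟩ := exists_norm_centerMass_consensusWeight_sub_le (ι := Fin N) (α := α)
    hσmono (fun t => ⟨hs_pos _, hs_lt1 _⟩)
    ((LipschitzWith.of_abs_sub_le_mul_norm hLs).comp_div_const τ)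
    hσ_bot hσ_top hσ_slope (.of_abs_sub_le_mul_norm hLlip) (.of_abs_sub_le_mul_norm hGlip)
    hLbd hGbd hα.le hβ.1.ne' hR.le
  refine ⟨C * √N + 1, by positivity, fun x y Qx Qy hx hy hQx hQy => ?_⟩
  calc _ ≤ C * ∑ i, ‖x i - y i‖ :=
        hCxy x y Qx Qy (by simpa [IsSoftQuantile, one_div] using hQx)
          (by simpa [IsSoftQuantile, one_div] using hQy) fun i => (norm_le_sqrt_sum_sq y i).trans hy
    _ ≤ C * (√N * √(∑ i, ‖x i - y i‖ ^ 2)) := by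
        gcongr
        simpa using sum_norm_le_sqrt_card_mul_sqrt_sum_sq (x - y)
    _ ≤ _ := by nlinarith [sqrt_nonneg (∑ i, ‖x i - y i‖ ^ 2)]
end

section
/- Under the standing hypotheses, for every N ∈ ℕ and every configuration x ∈ (ℝ^d)^N, the empirical consensus point satisfies ‖𝔪_N(x)‖₂ ≤ β^{−1/4} e^{α(G_max − G_min)} N^{−1/4} ‖x‖_{N,2}. -/
/-!
The consensus point is a weighted mean of the particles with weights `e i * s i`, where the Gibbs
factors `e i = exp (-α G (x i))` lie in `[exp (-α Gmax), exp (-α Gmin)]`; trading them for the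
constants costs the factor `exp (α (Gmax - Gmin))`, leaving the mean of `‖x i‖` under the quantile
weights `s i ∈ [0, 1]`, whose total is `t = N β`. That mean is at most `max ‖x i‖ ≤ ‖x‖_{N,2}`, and
by Cauchy–Schwarz with `s i ^ 2 ≤ s i` it is also at most `t ^ (-1/2) ‖x‖_{N,2}`; the geometric mean
of the two bounds is `t ^ (-1/4) ‖x‖_{N,2}`.
-/

open Filter Topology Finset

section WeightedMean

variable {ι : Type*} [Fintype ι]

theorem norm_inv_sum_smul_sum_le {E : Type*} [SeminormedAddCommGroup E] [NormedSpace ℝ E]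
    (w : ι → ℝ) (hw : ∀ i, 0 ≤ w i) (v : ι → E) :
    ‖(∑ i, w i)⁻¹ • ∑ i, w i • v i‖ ≤ (∑ i, w i * ‖v i‖) / ∑ i, w i := by
  rw [norm_smul, Real.norm_of_nonneg (inv_nonneg.2 (sum_nonneg fun i _ => hw i)),
    inv_mul_eq_div]
  refine div_le_div_of_nonneg_right ((norm_sum_le _ _).trans_eq (sum_congr rfl fun i _ => ?_))
    (sum_nonneg fun i _ => hw i)
  rw [norm_smul, Real.norm_of_nonneg (hw i)]

theorem sum_mul_mul_div_sum_mul_le_of_mem_Icc (e s f : ι → ℝ) {a b : ℝ} (ha : 0 < a)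
    (he : ∀ i, e i ∈ Set.Icc a b) (hs : ∀ i, 0 ≤ s i) (hf : ∀ i, 0 ≤ f i) :
    (∑ i, e i * s i * f i) / (∑ i, e i * s i) ≤ b / a * ((∑ i, s i * f i) / ∑ i, s i) := by
  rcases (sum_nonneg fun i _ => hs i).eq_or_lt with hzero | hpos
  · have hs0 : ∀ i, s i = 0 := fun i =>
      (sum_eq_zero_iff_of_nonneg fun i _ => hs i).1 hzero.symm i (mem_univ i)
    simp [hs0]
  obtain ⟨j⟩ : Nonempty ι := univ_nonempty_iff.1 (nonempty_of_sum_ne_zero hpos.ne')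
  have hb : 0 ≤ b := ha.le.trans ((he j).1.trans (he j).2)
  calc (∑ i, e i * s i * f i) / (∑ i, e i * s i)
      ≤ (b * ∑ i, s i * f i) / (a * ∑ i, s i) := by
        refine div_le_div₀ (mul_nonneg hb (sum_nonneg fun i _ => mul_nonneg (hs i) (hf i))) ?_
          (mul_pos ha hpos) ?_ <;> rw [mul_sum] <;> refine sum_le_sum fun i _ => ?_
        · rw [mul_assoc]
          exact mul_le_mul_of_nonneg_right (he i).2 (mul_nonneg (hs i) (hf i))
        · exact mul_le_mul_of_nonneg_right (he i).1 (hs i)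
    _ = b / a * ((∑ i, s i * f i) / ∑ i, s i) := mul_div_mul_comm _ _ _ _

theorem sum_mul_div_sum_le_sqrt_sum_sq (s f : ι → ℝ) (hs : ∀ i, 0 ≤ s i) :
    (∑ i, s i * f i) / ∑ i, s i ≤ √(∑ i, f i ^ 2) := by
  refine div_le_of_le_mul₀ (sum_nonneg fun i _ => hs i) (Real.sqrt_nonneg _) ?_
  rw [mul_sum]
  refine sum_le_sum fun i _ => ?_
  rw [mul_comm]
  refine mul_le_mul_of_nonneg_right (Real.le_sqrt_of_sq_le ?_) (hs i)
  exact single_le_sum (f := fun j => f j ^ 2) (fun j _ => sq_nonneg _) (mem_univ i)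

theorem sum_mul_le_sqrt_sum_mul_sqrt_sum_sq_of_le_one (s f : ι → ℝ) (hs₀ : ∀ i, 0 ≤ s i)
    (hs₁ : ∀ i, s i ≤ 1) : ∑ i, s i * f i ≤ √(∑ i, s i) * √(∑ i, f i ^ 2) := by
  refine (Real.sum_mul_le_sqrt_mul_sqrt _ _ _).trans ?_
  gcongr with i
  nlinarith [hs₀ i, hs₁ i]

theorem le_rpow_neg_quarter_mul {r R t : ℝ} (ht : 0 < t) (hR : 0 ≤ R) (h₁ : r ≤ R)
    (h₂ : r ≤ t ^ (-(1 : ℝ) / 2) * R) : r ≤ t ^ (-(1 : ℝ) / 4) * R := by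
  set u := t ^ (-(1 : ℝ) / 4)
  have hu : 0 ≤ u := by positivity
  have hsq : t ^ (-(1 : ℝ) / 2) = u ^ 2 := by
    rw [← Real.rpow_natCast, ← Real.rpow_mul ht.le]
    norm_num
  rcases le_or_gt r 0 with hr | hr
  · exact hr.trans (mul_nonneg hu hR)
  -- `r ^ 2 ≤ R * (u ^ 2 * R) = (u * R) ^ 2`
  rw [hsq] at h₂
  nlinarith [mul_le_mul h₁ h₂ hr.le hR, mul_nonneg hu hR]

theorem sum_mul_div_sum_le_rpow_mul_sqrt_sum_sq (s f : ι → ℝ) (hs₀ : ∀ i, 0 ≤ s i)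
    (hs₁ : ∀ i, s i ≤ 1) (hpos : 0 < ∑ i, s i) :
    (∑ i, s i * f i) / ∑ i, s i ≤ (∑ i, s i) ^ (-(1 : ℝ) / 4) * √(∑ i, f i ^ 2) := by
  refine le_rpow_neg_quarter_mul hpos (Real.sqrt_nonneg _)
    (sum_mul_div_sum_le_sqrt_sum_sq s f hs₀) ?_
  have hsqrt_div : √(∑ i, s i) / ∑ i, s i = (∑ i, s i) ^ (-(1 : ℝ) / 2) := by
    rw [Real.sqrt_eq_rpow, ← Real.rpow_sub_one hpos.ne']
    norm_num
  calc (∑ i, s i * f i) / ∑ i, s i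
      ≤ (√(∑ i, s i) * √(∑ i, f i ^ 2)) / ∑ i, s i := by
        gcongr
        exact sum_mul_le_sqrt_sum_mul_sqrt_sum_sq_of_le_one s f hs₀ hs₁
    _ = (∑ i, s i) ^ (-(1 : ℝ) / 2) * √(∑ i, f i ^ 2) := by
        rw [← hsqrt_div, div_mul_eq_mul_div, mul_comm (√(∑ i, s i))]

end WeightedMean

theorem empirical_consensus_linear_growth_general
    (d : ℕ) (s : ℝ → ℝ)
    (hs_pos : ∀ z, 0 < s z) (hs_lt1 : ∀ z, s z < 1)
    (β τ α : ℝ) (hβ : 0 < β ∧ β < 1) (hα : 0 < α)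
    (L G : EuclideanSpace ℝ (Fin d) → ℝ)
    (Gmin Gmax : ℝ) (hGbd : ∀ x, Gmin ≤ G x ∧ G x ≤ Gmax)
    (N : ℕ) (x : Fin N → EuclideanSpace ℝ (Fin d))
    (Qx : ℝ)
    (hQx : (1 / (N : ℝ)) * ∑ i, s ((Qx - L (x i)) / τ) = β) :
    ‖(∑ i, Real.exp (-α * G (x i)) * s ((Qx - L (x i)) / τ))⁻¹ •
        (∑ i, (Real.exp (-α * G (x i)) * s ((Qx - L (x i)) / τ)) • x i)‖
      ≤ β ^ (-(1 : ℝ) / 4) * Real.exp (α * (Gmax - Gmin)) * (N : ℝ) ^ (-(1 : ℝ) / 4)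
        * Real.sqrt (∑ i, ‖x i‖ ^ 2) := by
  set q : Fin N → ℝ := fun i => s ((Qx - L (x i)) / τ)
  have hN : (0 : ℝ) < N := by
    rcases N.eq_zero_or_pos with rfl | hN
    · simp only [CharP.cast_eq_zero, div_zero, zero_mul] at hQx
      exact absurd hQx hβ.1.ne
    · exact_mod_cast hN
  have hq_sum : ∑ i, q i = N * β := by
    rw [← hQx]
    field_simp
  have hgibbs : ∀ i, Real.exp (-α * G (x i)) ∈
      Set.Icc (Real.exp (-α * Gmax)) (Real.exp (-α * Gmin)) := fun i =>
    ⟨Real.exp_le_exp.2 (by nlinarith [hGbd (x i)]), Real.exp_le_exp.2 (by nlinarith [hGbd (x i)])⟩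
  calc _ ≤ (∑ i, Real.exp (-α * G (x i)) * q i * ‖x i‖) / ∑ i, Real.exp (-α * G (x i)) * q i :=
        norm_inv_sum_smul_sum_le _ (fun i => mul_nonneg (Real.exp_pos _).le (hs_pos _).le) _
    _ ≤ Real.exp (-α * Gmin) / Real.exp (-α * Gmax) * ((∑ i, q i * ‖x i‖) / ∑ i, q i) :=
        sum_mul_mul_div_sum_mul_le_of_mem_Icc _ q _ (Real.exp_pos _) hgibbs
          (fun i => (hs_pos _).le) (fun i => norm_nonneg _)
    _ ≤ Real.exp (-α * Gmin) / Real.exp (-α * Gmax) *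
          ((N * β) ^ (-(1 : ℝ) / 4) * √(∑ i, ‖x i‖ ^ 2)) := by
        rw [← hq_sum]
        gcongr
        exact sum_mul_div_sum_le_rpow_mul_sqrt_sum_sq q _ (fun i => (hs_pos _).le)
          (fun i => (hs_lt1 _).le) (hq_sum ▸ mul_pos hN hβ.1)
    _ = _ := by
        rw [← Real.exp_sub, Real.mul_rpow hN.le hβ.1.le]
        ring_nf

/-- Linear growth of the empirical consensus map:
`‖𝔪_N(x)‖ ≤ β^{-1/4} e^{α(G_max - G_min)} N^{-1/4} ‖x‖_{N,2}`. -/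
theorem empirical_consensus_linear_growth
    (d : ℕ) (s : ℝ → ℝ)
    (hs_cont : Continuous s) (hs_mono : StrictMono s)
    (hs_pos : ∀ z, 0 < s z) (hs_lt1 : ∀ z, s z < 1)
    (hs_bot : Tendsto s atBot (𝓝 0)) (hs_top : Tendsto s atTop (𝓝 1))
    (β τ α : ℝ) (hβ : 0 < β ∧ β < 1) (hτ : 0 < τ) (hα : 0 < α)
    (L G : EuclideanSpace ℝ (Fin d) → ℝ) (hL : Measurable L) (hG : Measurable G)
    (Gmin Gmax : ℝ) (hGbd : ∀ x, Gmin ≤ G x ∧ G x ≤ Gmax)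
    (N : ℕ) (x : Fin N → EuclideanSpace ℝ (Fin d))
    (Qx : ℝ)
    (hQx : (1 / (N : ℝ)) * ∑ i, s ((Qx - L (x i)) / τ) = β) :
    ‖(∑ i, Real.exp (-α * G (x i)) * s ((Qx - L (x i)) / τ))⁻¹ •
        (∑ i, (Real.exp (-α * G (x i)) * s ((Qx - L (x i)) / τ)) • x i)‖
      ≤ β ^ (-(1 : ℝ) / 4) * Real.exp (α * (Gmax - Gmin)) * (N : ℝ) ^ (-(1 : ℝ) / 4)
        * Real.sqrt (∑ i, ‖x i‖ ^ 2) :=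
  empirical_consensus_linear_growth_general d s hs_pos hs_lt1 β τ α hβ hα L G Gmin Gmax hGbd N x Qx
    hQx
end

section
/- Under the standing hypotheses, let ρ be a Borel probability measure on ℝ^d with finite second moment, let q = q_ρ and J = J[ρ], and suppose that for some r_G ∈ (0, R_G], r ∈ (0, r_G], u > 0, and δ_lev > 0 one has q + δ_lev ≤ L_min + min{L_∞, (η_L r_G)^{1/ν_L}}, u + G̃_r ≤ G_∞, and ρ(B_r(θ*)) > 0. Then ‖m(ρ) − θ*‖₂ ≤ r_G + η_G⁻¹ (u + G̃_r)^{ν_G} + [e^{−αu} / (c_in(q,r) ρ(B_r(θ*)))] · ∫ ‖θ − θ̃_G‖₂ dJ(θ) + [e^{α Δ_r} c_out(δ_lev) / (c_in(q,r) ρ(B_r(θ*)))] · ∫ ‖θ − θ̃_G‖₂ dρ(θ). -/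
/-!
Write `η = s((q - L)/τ)` and `w = e^{-αG} η`, so that `m(ρ)` is the `w ρ`-mean and
`‖m(ρ) - θ̃‖ ≤ (∫ w dρ)⁻¹ ∫ w ‖x - θ̃‖ dρ`. Every point `x` falls into one of three regimes.
If `L x ≤ q + δ` and `G x - G θ̃ ≤ u + G̃_r`, the Hölder error bound for `L` puts `x` within `r_G`
of `Θ`, and the growth of `G` then puts it within `η_G⁻¹ (u + G̃_r)^{ν_G}` of `θ̃`. If
`G x - G θ̃ > u + G̃_r`, the factor `e^{-αG x}` is at most `e^{-αu}` times its minimum over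
`B_r(θ*)`. If `L x > q + δ`, then `η x ≤ c_out`. The normaliser `∫ w dρ` is bounded below by the
contribution of `B_r(θ*)`, on which `η ≥ c_in` and `G ≤ G θ̃ + G̃_r ≤ G_min + Δ_r`.
-/

open MeasureTheory Filter Topology Metric Real

section Lipschitz

variable {E : Type*} [NormedAddCommGroup E] {f : E → ℝ} {K : ℝ}

theorem continuous_of_abs_sub_le_mul_norm (hf : ∀ x y, |f x - f y| ≤ K * ‖x - y‖) :
    Continuous f :=
  (LipschitzWith.of_dist_le' fun x y => by
    rw [Real.dist_eq, dist_eq_norm]; exact hf x y).continuous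

theorem nonneg_of_abs_sub_le_mul_norm [Nontrivial E] (hf : ∀ x y, |f x - f y| ≤ K * ‖x - y‖) :
    0 ≤ K := by
  obtain ⟨x, hx⟩ := exists_ne (0 : E)
  exact nonneg_of_mul_nonneg_left ((abs_nonneg _).trans (hf x 0)) (norm_pos_iff.2 (by simpa))

theorem le_add_mul_of_mem_ball (hf : ∀ x y, |f x - f y| ≤ K * ‖x - y‖) (hK : 0 ≤ K) {x y : E}
    {r : ℝ} (hx : x ∈ Metric.ball y r) : f x ≤ f y + K * r := by
  have := (le_abs_self _).trans (hf x y)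
  have : K * ‖x - y‖ ≤ K * r := by gcongr; exact (mem_ball_iff_norm.1 hx).le
  linarith

end Lipschitz

section SupremumOnSet

variable {X : Type*} {f : X → ℝ} {S : Set X} {M : ℝ}

theorem sub_le_csSup_image_sub (hM : ∀ x, f x ≤ M) {x : X} (hx : x ∈ S) (c : ℝ) :
    f x - c ≤ sSup ((fun y => f y - c) '' S) :=
  le_csSup ⟨M - c, by rintro _ ⟨y, -, rfl⟩; linarith [hM y]⟩ ⟨x, hx, rfl⟩

theorem csSup_image_sub_le (hM : ∀ x, f x ≤ M) (hS : S.Nonempty) (c : ℝ) :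
    sSup ((fun y => f y - c) '' S) ≤ sSup (f '' S) - c :=
  csSup_le (hS.image _) <| by
    rintro _ ⟨y, hy, rfl⟩
    have hbdd : BddAbove (f '' S) := ⟨M, by rintro _ ⟨z, -, rfl⟩; exact hM z⟩
    linarith [le_csSup hbdd ⟨y, hy, rfl⟩]

end SupremumOnSet

theorem infDist_le_of_holder_error_bound {X : Type*} [PseudoMetricSpace X] {L : X → ℝ}
    {Θ : Set X} {Lmin ηL νL Linf r : ℝ} (hηL : 0 < ηL) (hνL : 0 < νL) (hr : 0 ≤ r)
    (hHolder : ∀ x, L x - Lmin ≤ Linf → infDist x Θ ≤ ηL⁻¹ * (L x - Lmin) ^ νL)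
    {x : X} (hx₀ : Lmin ≤ L x) (hx : L x ≤ Lmin + min Linf ((ηL * r) ^ ((1 : ℝ) / νL))) :
    infDist x Θ ≤ r := by
  have hpow : (L x - Lmin) ^ νL ≤ ηL * r := calc
    (L x - Lmin) ^ νL ≤ ((ηL * r) ^ ((1 : ℝ) / νL)) ^ νL :=
      rpow_le_rpow (by linarith) (by linarith [min_le_right Linf ((ηL * r) ^ ((1 : ℝ) / νL))])
        hνL.le
    _ = ηL * r := by rw [one_div, rpow_inv_rpow (by positivity) hνL.ne']
  calc infDist x Θ ≤ ηL⁻¹ * (L x - Lmin) ^ νL :=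
        hHolder x (by linarith [min_le_left Linf ((ηL * r) ^ ((1 : ℝ) / νL))])
    _ ≤ ηL⁻¹ * (ηL * r) := by gcongr
    _ = r := by field_simp

theorem norm_sub_le_of_sublevel {X : Type*} [SeminormedAddCommGroup X] {L G : X → ℝ}
    {Θ : Set X} {θ : X} {Lmin ηL νL Linf r ηG νG Ginf q δ c : ℝ} (hηL : 0 < ηL) (hνL : 0 < νL)
    (hr : 0 ≤ r) (hηG : 0 ≤ ηG) (hνG : 0 ≤ νG) (hLmin : ∀ x, Lmin ≤ L x)
    (hHolder : ∀ x, L x - Lmin ≤ Linf → infDist x Θ ≤ ηL⁻¹ * (L x - Lmin) ^ νL)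
    (hθ : ∀ x, infDist x Θ ≤ r → G θ ≤ G x)
    (hGrowth : ∀ x, infDist x Θ ≤ r → G x - G θ ≤ Ginf → ‖x - θ‖ ≤ ηG⁻¹ * (G x - G θ) ^ νG)
    (hlev : q + δ ≤ Lmin + min Linf ((ηL * r) ^ ((1 : ℝ) / νL))) (hc : c ≤ Ginf) {x : X}
    (hLx : L x ≤ q + δ) (hGx : G x - G θ ≤ c) : ‖x - θ‖ ≤ ηG⁻¹ * c ^ νG := by
  have hdist := infDist_le_of_holder_error_bound hηL hνL hr hHolder (hLmin x) (hLx.trans hlev)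
  have := hθ x hdist
  calc ‖x - θ‖ ≤ ηG⁻¹ * (G x - G θ) ^ νG := hGrowth x hdist (hGx.trans hc)
    _ ≤ ηG⁻¹ * c ^ νG := by gcongr

theorem inv_mul_le_add_div_of_le_mul_add {B b X C P : ℝ} (hb : 0 < b) (hbB : b ≤ B)
    (hP : 0 ≤ P) (hX : X ≤ C * B + P) : B⁻¹ * X ≤ C + P / b := calc
  B⁻¹ * X ≤ B⁻¹ * (C * B + P) := by have := hb.trans_le hbB; gcongr
  _ = C + P / B := by rw [mul_add, mul_comm C, ← mul_assoc, inv_mul_cancel₀ (hb.trans_le hbB).ne',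
      one_mul, inv_mul_eq_div]
  _ ≤ C + P / b := by gcongr

section WeightedMean

variable {E : Type*} [NormedAddCommGroup E] [NormedSpace ℝ E] [CompleteSpace E]
  [MeasurableSpace E] {μ : Measure E} {w : E → ℝ}

theorem norm_inv_integral_smul_integral_sub_le (hw₀ : ∀ x, 0 ≤ w x) (hw : Integrable w μ)
    (hwx : Integrable (fun x => w x • x) μ) (hB : 0 < ∫ x, w x ∂μ) (c : E) :
    ‖(∫ x, w x ∂μ)⁻¹ • (∫ x, w x • x ∂μ) - c‖
      ≤ (∫ x, w x ∂μ)⁻¹ * ∫ x, w x * ‖x - c‖ ∂μ := by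
  have hcentre : (∫ x, w x ∂μ)⁻¹ • (∫ x, w x • x ∂μ) - c
      = (∫ x, w x ∂μ)⁻¹ • ∫ x, w x • (x - c) ∂μ := by
    simp_rw [smul_sub]
    rw [integral_sub hwx (hw.smul_const c), integral_smul_const, smul_sub, smul_smul,
      inv_mul_cancel₀ hB.ne', one_smul]
  rw [hcentre, norm_smul, Real.norm_of_nonneg (inv_nonneg.2 hB.le)]
  gcongr
  refine (norm_integral_le_integral_norm _).trans_eq (integral_congr_ae (ae_of_all _ fun x => ?_))
  show ‖w x • (x - c)‖ = w x * ‖x - c‖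
  rw [norm_smul, Real.norm_of_nonneg (hw₀ x)]

end WeightedMean

theorem integral_le_mul_add_mul_add_mul {X : Type*} [MeasurableSpace X] {μ : Measure X}
    {f g₁ g₂ g₃ : X → ℝ} {a₁ a₂ a₃ : ℝ} (hf : Integrable f μ) (hg₁ : Integrable g₁ μ)
    (hg₂ : Integrable g₂ μ) (hg₃ : Integrable g₃ μ)
    (h : ∀ x, f x ≤ a₁ * g₁ x + a₂ * g₂ x + a₃ * g₃ x) :
    ∫ x, f x ∂μ ≤ a₁ * ∫ x, g₁ x ∂μ + a₂ * ∫ x, g₂ x ∂μ + a₃ * ∫ x, g₃ x ∂μ := by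
  have h₁₂ : Integrable (fun x => a₁ * g₁ x + a₂ * g₂ x) μ :=
    (hg₁.const_mul a₁).add (hg₂.const_mul a₂)
  calc ∫ x, f x ∂μ ≤ ∫ x, a₁ * g₁ x + a₂ * g₂ x + a₃ * g₃ x ∂μ :=
        integral_mono hf (h₁₂.add (hg₃.const_mul a₃)) h
    _ = _ := by
      rw [integral_add h₁₂ (hg₃.const_mul a₃), integral_add (hg₁.const_mul a₁) (hg₂.const_mul a₂),
        integral_const_mul, integral_const_mul, integral_const_mul]

theorem mul_measureReal_le_integral {X : Type*} [MeasurableSpace X] {μ : Measure X}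
    [IsFiniteMeasure μ] {w : X → ℝ} {S : Set X} {c : ℝ} (hS : MeasurableSet S)
    (hw₀ : ∀ x, 0 ≤ w x) (hw : Integrable w μ) (hc : ∀ x ∈ S, c ≤ w x) :
    c * μ.real S ≤ ∫ x, w x ∂μ :=
  (setIntegral_ge_of_const_le_real hS (measure_ne_top μ S) hc hw.integrableOn).trans
    (setIntegral_le_integral hw (ae_of_all _ hw₀))

section GibbsWeight

variable {E : Type*} [NormedAddCommGroup E] {s : ℝ → ℝ} {L G : E → ℝ} {θ : E}
  {α τ q δ Gmin c C : ℝ}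

theorem gibbs_weight_mul_norm_sub_le (hs_mono : Monotone s) (hs₀ : ∀ z, 0 ≤ s z) (hτ : 0 < τ)
    (hα : 0 ≤ α) (hGmin : ∀ x, Gmin ≤ G x) (hC : 0 ≤ C)
    (hloc : ∀ x, L x ≤ q + δ → G x - G θ ≤ c → ‖x - θ‖ ≤ C) (x : E) :
    exp (-α * G x) * s ((q - L x) / τ) * ‖x - θ‖
      ≤ C * (exp (-α * G x) * s ((q - L x) / τ))
        + exp (-α * (G θ + c)) * (s ((q - L x) / τ) * ‖x - θ‖)
        + exp (-α * Gmin) * s (-δ / τ) * ‖x - θ‖ := by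
  have hη := hs₀ ((q - L x) / τ)
  have hD := norm_nonneg (x - θ)
  have hnear : 0 ≤ C * (exp (-α * G x) * s ((q - L x) / τ)) := by positivity
  have hhigh : 0 ≤ exp (-α * (G θ + c)) * (s ((q - L x) / τ) * ‖x - θ‖) := by positivity
  have hout : 0 ≤ exp (-α * Gmin) * s (-δ / τ) * ‖x - θ‖ :=
    mul_nonneg (mul_nonneg (exp_pos _).le (hs₀ _)) hD
  by_cases hlev : L x ≤ q + δ
  · by_cases hG : G x - G θ ≤ c
    · have : exp (-α * G x) * s ((q - L x) / τ) * ‖x - θ‖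
          ≤ C * (exp (-α * G x) * s ((q - L x) / τ)) := by
        rw [mul_comm C]; gcongr; exact hloc x hlev hG
      linarith
    · have hexp : exp (-α * G x) ≤ exp (-α * (G θ + c)) :=
        exp_le_exp.2 (mul_le_mul_of_nonpos_left (by linarith) (by linarith))
      have : exp (-α * G x) * s ((q - L x) / τ) * ‖x - θ‖
          ≤ exp (-α * (G θ + c)) * (s ((q - L x) / τ) * ‖x - θ‖) := by
        rw [mul_assoc]; gcongr
      linarith
  · have hη_out : s ((q - L x) / τ) ≤ s (-δ / τ) := hs_mono (by gcongr; linarith)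
    have hexp : exp (-α * G x) ≤ exp (-α * Gmin) :=
      exp_le_exp.2 (mul_le_mul_of_nonpos_left (hGmin x) (by linarith))
    have : exp (-α * G x) * s ((q - L x) / τ) * ‖x - θ‖
        ≤ exp (-α * Gmin) * s (-δ / τ) * ‖x - θ‖ := by gcongr
    linarith

end GibbsWeight

section GibbsMean

variable {E : Type*} [NormedAddCommGroup E] [NormedSpace ℝ E] [CompleteSpace E]
  [MeasurableSpace E] [OpensMeasurableSpace E] {μ : Measure E} [IsFiniteMeasure μ]
  {s : ℝ → ℝ} {L G : E → ℝ} {θ : E} {α τ q δ Gmin c C b : ℝ} {S : Set E}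

theorem norm_gibbsMean_sub_le_of_le_weight (hs_cont : Continuous s) (hs_mono : Monotone s)
    (hs₀ : ∀ z, 0 ≤ s z) (hs₁ : ∀ z, s z ≤ 1) (hτ : 0 < τ) (hα : 0 ≤ α)
    (hL : Continuous L) (hG : Continuous G) (hGmin : ∀ x, Gmin ≤ G x) (hid : Integrable id μ)
    (hC : 0 ≤ C) (hloc : ∀ x, L x ≤ q + δ → G x - G θ ≤ c → ‖x - θ‖ ≤ C)
    (hS : MeasurableSet S) (hb : 0 < b * μ.real S)
    (hbS : ∀ x ∈ S, b ≤ exp (-α * G x) * s ((q - L x) / τ)) :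
    ‖(∫ x, exp (-α * G x) * s ((q - L x) / τ) ∂μ)⁻¹ •
        (∫ x, (exp (-α * G x) * s ((q - L x) / τ)) • x ∂μ) - θ‖
      ≤ C + exp (-α * (G θ + c)) / (b * μ.real S) * ∫ x, s ((q - L x) / τ) * ‖x - θ‖ ∂μ
        + exp (-α * Gmin) * s (-δ / τ) / (b * μ.real S) * ∫ x, ‖x - θ‖ ∂μ := by
  set η : E → ℝ := fun x => s ((q - L x) / τ)
  set w : E → ℝ := fun x => exp (-α * G x) * η x
  have hw₀ (x : E) : 0 ≤ w x := mul_nonneg (exp_pos _).le (hs₀ _)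
  have hη_le (x : E) : ‖η x‖ ≤ 1 := by rw [Real.norm_of_nonneg (hs₀ _)]; exact hs₁ _
  have hw_le (x : E) : ‖w x‖ ≤ exp (-α * Gmin) := by
    rw [Real.norm_of_nonneg (hw₀ x)]
    calc w x ≤ exp (-α * G x) * 1 := mul_le_mul_of_nonneg_left (hs₁ _) (exp_pos _).le
      _ ≤ exp (-α * Gmin) := by
        rw [mul_one]; exact exp_le_exp.2 (mul_le_mul_of_nonpos_left (hGmin x) (by linarith))
  have hη_meas : AEStronglyMeasurable η μ := by fun_prop
  have hw_meas : AEStronglyMeasurable w μ := by fun_prop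
  have hD : Integrable (fun x => ‖x - θ‖) μ := (hid.sub (integrable_const θ)).norm
  have hw : Integrable w μ := .of_bound hw_meas _ (ae_of_all _ hw_le)
  have hB : b * μ.real S ≤ ∫ x, w x ∂μ := mul_measureReal_le_integral hS hw₀ hw hbS
  have hηD := hD.bdd_mul hη_meas (ae_of_all _ hη_le)
  have hint := integral_le_mul_add_mul_add_mul (hD.bdd_mul hw_meas (ae_of_all _ hw_le)) hw hηD hD
    (gibbs_weight_mul_norm_sub_le hs_mono hs₀ hτ hα hGmin hC hloc)
  calc _ ≤ (∫ x, w x ∂μ)⁻¹ * ∫ x, w x * ‖x - θ‖ ∂μ :=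
        norm_inv_integral_smul_integral_sub_le hw₀ hw
          (hid.bdd_smul _ hw_meas (ae_of_all _ hw_le)) (hb.trans_le hB) θ
    _ ≤ C + (exp (-α * (G θ + c)) * ∫ x, η x * ‖x - θ‖ ∂μ
          + exp (-α * Gmin) * s (-δ / τ) * ∫ x, ‖x - θ‖ ∂μ) / (b * μ.real S) := by
        refine inv_mul_le_add_div_of_le_mul_add hb hB ?_ (hint.trans_eq (add_assoc _ _ _))
        have := hs₀ (-δ / τ)
        have : 0 ≤ ∫ x, η x * ‖x - θ‖ ∂μ :=
          integral_nonneg fun x => mul_nonneg (hs₀ _) (norm_nonneg _)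
        have : 0 ≤ ∫ x, ‖x - θ‖ ∂μ := integral_nonneg fun x => norm_nonneg _
        positivity
    _ = _ := by ring

theorem norm_gibbsMean_sub_le {k c₀ u Δ : ℝ} (hs_cont : Continuous s) (hs_mono : Monotone s)
    (hs₀ : ∀ z, 0 ≤ s z) (hs₁ : ∀ z, s z ≤ 1) (hτ : 0 < τ) (hα : 0 ≤ α)
    (hL : Continuous L) (hG : Continuous G) (hGmin : ∀ x, Gmin ≤ G x) (hid : Integrable id μ)
    (hC : 0 ≤ C) (hloc : ∀ x, L x ≤ q + δ → G x - G θ ≤ u + c₀ → ‖x - θ‖ ≤ C)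
    (hS : MeasurableSet S) (hk : 0 < k) (hμS : 0 < μ.real S) (hSG : ∀ x ∈ S, G x - G θ ≤ c₀)
    (hSη : ∀ x ∈ S, k ≤ s ((q - L x) / τ)) (hΔ : G θ + c₀ - Gmin ≤ Δ) :
    ‖(∫ x, exp (-α * G x) * s ((q - L x) / τ) ∂μ)⁻¹ •
        (∫ x, (exp (-α * G x) * s ((q - L x) / τ)) • x ∂μ) - θ‖
      ≤ C + exp (-α * u) / (k * μ.real S) * ∫ x, s ((q - L x) / τ) * ‖x - θ‖ ∂μ
        + exp (α * Δ) * s (-δ / τ) / (k * μ.real S) * ∫ x, ‖x - θ‖ ∂μ := by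
  have hb : 0 < exp (-α * (G θ + c₀)) * k * μ.real S := by positivity
  have hbS (x : E) (hx : x ∈ S) :
      exp (-α * (G θ + c₀)) * k ≤ exp (-α * G x) * s ((q - L x) / τ) :=
    mul_le_mul (exp_le_exp.2 (mul_le_mul_of_nonpos_left (by linarith [hSG x hx]) (by linarith)))
      (hSη x hx) hk.le (exp_pos _).le
  have h := norm_gibbsMean_sub_le_of_le_weight hs_cont hs_mono hs₀ hs₁ hτ hα hL hG hGmin hid hC
    hloc hS hb hbS
  have e₁ : exp (-α * (G θ + (u + c₀))) / (exp (-α * (G θ + c₀)) * k * μ.real S)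
      = exp (-α * u) / (k * μ.real S) := by
    rw [show -α * (G θ + (u + c₀)) = -α * u + -α * (G θ + c₀) by ring, exp_add]
    field_simp
  have e₂ : exp (-α * Gmin) * s (-δ / τ) / (exp (-α * (G θ + c₀)) * k * μ.real S)
      = exp (α * (G θ + c₀ - Gmin)) * s (-δ / τ) / (k * μ.real S) := by
    rw [show -α * Gmin = α * (G θ + c₀ - Gmin) + -α * (G θ + c₀) by ring, exp_add]
    field_simp
  rw [e₁, e₂] at h
  refine h.trans ?_
  have := hs₀ (-δ / τ)
  have : 0 ≤ ∫ x, ‖x - θ‖ ∂μ := integral_nonneg fun x => norm_nonneg _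
  gcongr

end GibbsMean

theorem soft_laplace_principle_raw_general
    (d : ℕ) (s : ℝ → ℝ)
    (hs_cont : Continuous s) (hs_mono : StrictMono s)
    (hs_pos : ∀ z, 0 < s z) (hs_lt1 : ∀ z, s z < 1)
    (τ α : ℝ) (hτ : 0 < τ) (hα : 0 < α)
    (L G : EuclideanSpace ℝ (Fin d) → ℝ)
    (LL : ℝ) (hLlip : ∀ x y, |L x - L y| ≤ LL * ‖x - y‖)
    (LG : ℝ) (hGlip : ∀ x y, |G x - G y| ≤ LG * ‖x - y‖)
    (Lmin Lmax : ℝ) (hLbd : ∀ x, Lmin ≤ L x ∧ L x ≤ Lmax)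
    (Gmin Gmax : ℝ) (hGbd : ∀ x, Gmin ≤ G x ∧ G x ≤ Gmax)
    (Θ : Set (EuclideanSpace ℝ (Fin d)))
    (hΘ : Θ = {x | L x = Lmin})
    (θstar : EuclideanSpace ℝ (Fin d)) (hθstar : θstar ∈ Θ)
    (ηL νL Linf : ℝ) (hηL : 0 < ηL) (hνL : 0 < νL)
    (hHolder : ∀ x, L x - Lmin ≤ Linf →
      Metric.infDist x Θ ≤ ηL⁻¹ * (L x - Lmin) ^ νL)
    (RG : ℝ)
    (ηG νG Ginf : ℝ) (hηG : 0 < ηG) (hνG : 0 < νG)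
    (rG : ℝ) (hrG : 0 < rG ∧ rG ≤ RG)
    (θtilde : EuclideanSpace ℝ (Fin d))
    (hθtilde_ball : ‖θtilde - θstar‖ < rG)
    (hθtilde_min : ∀ x, Metric.infDist x Θ ≤ rG → G θtilde ≤ G x)
    (hGgrowth : ∀ x, Metric.infDist x Θ ≤ rG → G x - G θtilde ≤ Ginf →
      ‖x - θtilde‖ ≤ ηG⁻¹ * (G x - G θtilde) ^ νG)
    (ρ : Measure (EuclideanSpace ℝ (Fin d))) [IsProbabilityMeasure ρ]
    (hmom2 : Integrable (fun x => ‖x‖ ^ 2) ρ)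
    (q : ℝ)
    (r u δlev : ℝ) (hr : 0 < r ∧ r ≤ rG) (hu : 0 < u)
    (Gtr Δr : ℝ)
    (hGtr : Gtr = sSup ((fun θ => G θ - G θtilde) '' Metric.ball θstar r))
    (hΔr : Δr = sSup (G '' Metric.ball θstar r) - Gmin)
    (hlev : q + δlev ≤ Lmin + min Linf ((ηL * rG) ^ ((1 : ℝ) / νL)))
    (hmass_cond : u + Gtr ≤ Ginf)
    (hmass : 0 < (ρ (Metric.ball θstar r)).toReal) :
    ‖(∫ x, Real.exp (-α * G x) * s ((q - L x) / τ) ∂ρ)⁻¹ •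
        (∫ x, (Real.exp (-α * G x) * s ((q - L x) / τ)) • x ∂ρ) - θstar‖
      ≤ rG + ηG⁻¹ * (u + Gtr) ^ νG
        + Real.exp (-α * u)
            / (s ((q - Lmin - LL * r) / τ) * (ρ (Metric.ball θstar r)).toReal)
          * ∫ θ, s ((q - L θ) / τ) * ‖θ - θtilde‖ ∂ρ
        + Real.exp (α * Δr) * s (-δlev / τ)
            / (s ((q - Lmin - LL * r) / τ) * (ρ (Metric.ball θstar r)).toReal)
          * ∫ θ, ‖θ - θtilde‖ ∂ρ := by
  have hGmax (x : EuclideanSpace ℝ (Fin d)) : G x ≤ Gmax := (hGbd x).2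
  have hcentre : θstar ∈ ball θstar r := mem_ball_self hr.1
  have hGtr_ball (x) (hx : x ∈ ball θstar r) : G x - G θtilde ≤ Gtr :=
    hGtr ▸ sub_le_csSup_image_sub hGmax hx _
  have hGtr₀ : 0 ≤ Gtr := (sub_nonneg.2 (hθtilde_min θstar
    ((infDist_zero_of_mem hθstar).trans_le hrG.1.le))).trans (hGtr_ball θstar hcentre)
  have hC : 0 ≤ ηG⁻¹ * (u + Gtr) ^ νG := by positivity
  set m := (∫ x, Real.exp (-α * G x) * s ((q - L x) / τ) ∂ρ)⁻¹ •
    (∫ x, (Real.exp (-α * G x) * s ((q - L x) / τ)) • x ∂ρ)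
  refine (norm_sub_le_norm_sub_add_norm_sub m θtilde θstar).trans ?_
  -- `LL` can be negative only on a one-point space, where `m = θtilde = θstar`.
  rcases subsingleton_or_nontrivial (EuclideanSpace ℝ (Fin d)) with hE | hE
  · rw [Subsingleton.elim m θstar, Subsingleton.elim θtilde θstar, sub_self, norm_zero, add_zero]
    have := hs_pos ((q - Lmin - LL * r) / τ)
    have := hs_pos (-δlev / τ)
    have := hrG.1
    have : 0 ≤ ∫ θ, s ((q - L θ) / τ) * ‖θ - θstar‖ ∂ρ :=
      integral_nonneg fun θ => mul_nonneg (hs_pos _).le (norm_nonneg _)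
    positivity
  have hθL : L θstar = Lmin := by rw [hΘ] at hθstar; exact hθstar
  have hSη (x) (hx : x ∈ ball θstar r) : s ((q - Lmin - LL * r) / τ) ≤ s ((q - L x) / τ) :=
    hs_mono.monotone <| div_le_div_of_nonneg_right (by
      linarith [le_add_mul_of_mem_ball hLlip (nonneg_of_abs_sub_le_mul_norm hLlip) hx]) hτ.le
  have hΔ : G θtilde + Gtr - Gmin ≤ Δr := by
    linarith [hGtr ▸ csSup_image_sub_le hGmax ⟨θstar, hcentre⟩ (G θtilde)]
  have hid : Integrable id ρ :=
    ((memLp_two_iff_integrable_sq_norm aestronglyMeasurable_id).2 hmom2).integrable one_le_two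
  have := norm_gibbsMean_sub_le hs_cont hs_mono.monotone (fun z => (hs_pos z).le)
    (fun z => (hs_lt1 z).le) hτ hα.le (continuous_of_abs_sub_le_mul_norm hLlip)
    (continuous_of_abs_sub_le_mul_norm hGlip) (fun x => (hGbd x).1) hid hC
    (fun x => norm_sub_le_of_sublevel hηL hνL hrG.1.le hηG.le hνG.le (fun x => (hLbd x).1)
      hHolder hθtilde_min hGgrowth hlev hmass_cond)
    isOpen_ball.measurableSet (hs_pos _) hmass hGtr_ball hSη hΔ
  rw [measureReal_def] at this
  linarith

/-- Soft quantitative quantiled Laplace principle without compact support (raw form). -/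
theorem soft_laplace_principle_raw
    (d : ℕ) (s : ℝ → ℝ)
    (hs_cont : Continuous s) (hs_mono : StrictMono s)
    (hs_pos : ∀ z, 0 < s z) (hs_lt1 : ∀ z, s z < 1)
    (hs_bot : Tendsto s atBot (𝓝 0)) (hs_top : Tendsto s atTop (𝓝 1))
    (β τ α : ℝ) (hβ : 0 < β ∧ β < 1) (hτ : 0 < τ) (hα : 0 < α)
    (L G : EuclideanSpace ℝ (Fin d) → ℝ)
    (LL : ℝ) (hLlip : ∀ x y, |L x - L y| ≤ LL * ‖x - y‖)
    (LG : ℝ) (hGlip : ∀ x y, |G x - G y| ≤ LG * ‖x - y‖)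
    (Lmin Lmax : ℝ) (hLbd : ∀ x, Lmin ≤ L x ∧ L x ≤ Lmax)
    (Gmin Gmax : ℝ) (hGbd : ∀ x, Gmin ≤ G x ∧ G x ≤ Gmax)
    (Θ : Set (EuclideanSpace ℝ (Fin d)))
    (hΘ : Θ = {x | L x = Lmin}) (hΘne : Θ.Nonempty)
    (θstar : EuclideanSpace ℝ (Fin d)) (hθstar : θstar ∈ Θ)
    (ηL νL Linf : ℝ) (hηL : 0 < ηL) (hνL : 0 < νL) (hLinf : 0 < Linf)
    (hHolder : ∀ x, L x - Lmin ≤ Linf →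
      Metric.infDist x Θ ≤ ηL⁻¹ * (L x - Lmin) ^ νL)
    (RG : ℝ) (hRG : 0 < RG)
    (ηG νG Ginf : ℝ) (hηG : 0 < ηG) (hνG : 0 < νG) (hGinf : 0 < Ginf)
    (rG : ℝ) (hrG : 0 < rG ∧ rG ≤ RG)
    (θtilde : EuclideanSpace ℝ (Fin d))
    (hθtilde_ball : ‖θtilde - θstar‖ < rG)
    (hθtilde_min : ∀ x, Metric.infDist x Θ ≤ rG → G θtilde ≤ G x)
    (hGgrowth : ∀ x, Metric.infDist x Θ ≤ rG → G x - G θtilde ≤ Ginf →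
      ‖x - θtilde‖ ≤ ηG⁻¹ * (G x - G θtilde) ^ νG)
    (ρ : Measure (EuclideanSpace ℝ (Fin d))) [IsProbabilityMeasure ρ]
    (hmom2 : Integrable (fun x => ‖x‖ ^ 2) ρ)
    (q : ℝ) (hq : ∫ x, s ((q - L x) / τ) ∂ρ = β)
    (r u δlev : ℝ) (hr : 0 < r ∧ r ≤ rG) (hu : 0 < u) (hδ : 0 < δlev)
    (Gtr Δr : ℝ)
    (hGtr : Gtr = sSup ((fun θ => G θ - G θtilde) '' Metric.ball θstar r))
    (hΔr : Δr = sSup (G '' Metric.ball θstar r) - Gmin)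
    (hlev : q + δlev ≤ Lmin + min Linf ((ηL * rG) ^ ((1 : ℝ) / νL)))
    (hmass_cond : u + Gtr ≤ Ginf)
    (hmass : 0 < (ρ (Metric.ball θstar r)).toReal) :
    ‖(∫ x, Real.exp (-α * G x) * s ((q - L x) / τ) ∂ρ)⁻¹ •
        (∫ x, (Real.exp (-α * G x) * s ((q - L x) / τ)) • x ∂ρ) - θstar‖
      ≤ rG + ηG⁻¹ * (u + Gtr) ^ νG
        + Real.exp (-α * u)
            / (s ((q - Lmin - LL * r) / τ) * (ρ (Metric.ball θstar r)).toReal)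
          * ∫ θ, s ((q - L θ) / τ) * ‖θ - θtilde‖ ∂ρ
        + Real.exp (α * Δr) * s (-δlev / τ)
            / (s ((q - Lmin - LL * r) / τ) * (ρ (Metric.ball θstar r)).toReal)
          * ∫ θ, ‖θ - θtilde‖ ∂ρ :=
  soft_laplace_principle_raw_general d s hs_cont hs_mono hs_pos hs_lt1 τ α hτ hα L G LL hLlip LG
    hGlip Lmin Lmax hLbd Gmin Gmax hGbd Θ hΘ θstar hθstar ηL νL Linf hηL hνL hHolder RG ηG νG Ginf
    hηG hνG rG hrG θtilde hθtilde_ball hθtilde_min hGgrowth ρ hmom2 q r u δlev hr hu Gtr Δr hGtr hΔr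
    hlev hmass_cond hmass
end

section
/- Let ρ be a Borel probability measure on ℝ^d with finite second moment, and let m, θ* ∈ ℝ^d and λ, σ > 0. Set V = (1/2) ∫ ‖θ − θ*‖₂² dρ(θ), M = ‖m − θ*‖₂, a = 2λ − dσ², b = √2 (λ + dσ²), and c_d = dσ²/2. Then the quantity E = −λ ∫ ⟨θ − θ*, θ − m⟩ dρ(θ) + (dσ²/2) ∫ ‖θ − m‖₂² dρ(θ) satisfies the two-sided bound −aV − b √V · M ≤ E ≤ −aV + b √V · M + c_d M². -/
/-!
Writing `X = θ - θ*` and `u = θ* - m`, both integrals in `E` expand into the second moment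
`∫ ‖X‖² = 2V`, the cross term `J = ⟪∫ X, u⟫` and `‖u‖² = M²`, which gives
`E = -a V + (d σ² - λ) J + (d σ² / 2) M²`. Jensen's inequality `‖∫ X‖² ≤ ∫ ‖X‖²` bounds
`|J| ≤ √(2V) M`, and `|d σ² - λ| ≤ λ + d σ²` turns this into the two-sided bound.
-/

open MeasureTheory
open scoped RealInnerProductSpace

section SecondMoment

variable {Ω F : Type*} [MeasurableSpace Ω] {μ : Measure Ω}
  [NormedAddCommGroup F] [InnerProductSpace ℝ F] [CompleteSpace F] {X : Ω → F}

lemma integral_inner_self_add [IsFiniteMeasure μ] (hX : MemLp X 2 μ) (u : F) :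
    ∫ ω, ⟪X ω, X ω + u⟫ ∂μ = ∫ ω, ‖X ω‖ ^ 2 ∂μ + ⟪∫ ω, X ω ∂μ, u⟫ := by
  have hX1 : Integrable X μ := hX.integrable one_le_two
  simp only [inner_add_right, real_inner_self_eq_norm_sq]
  rw [integral_add (hX.integrable_norm_pow two_ne_zero) (hX1.inner_const u), real_inner_comm,
    ← integral_inner hX1]
  simp only [real_inner_comm]

lemma integral_norm_add_sq [IsProbabilityMeasure μ] (hX : MemLp X 2 μ) (u : F) :
    ∫ ω, ‖X ω + u‖ ^ 2 ∂μ = ∫ ω, ‖X ω‖ ^ 2 ∂μ + 2 * ⟪∫ ω, X ω ∂μ, u⟫ + ‖u‖ ^ 2 := by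
  have hX1 : Integrable X μ := hX.integrable one_le_two
  have hsq : Integrable (fun ω => ‖X ω‖ ^ 2) μ := hX.integrable_norm_pow two_ne_zero
  have hcross : Integrable (fun ω => 2 * ⟪X ω, u⟫) μ := (hX1.inner_const u).const_mul 2
  simp only [norm_add_sq_real]
  rw [integral_add (hsq.fun_add hcross) (integrable_const _), integral_add hsq hcross,
    integral_const_mul, integral_const, probReal_univ, one_smul, real_inner_comm,
    ← integral_inner hX1]
  simp only [real_inner_comm]

lemma sq_norm_integral_le_integral_norm_sq [IsProbabilityMeasure μ] (hX : MemLp X 2 μ) :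
    ‖∫ ω, X ω ∂μ‖ ^ 2 ≤ ∫ ω, ‖X ω‖ ^ 2 ∂μ := by
  have hvar : 0 ≤ ∫ ω, ‖X ω + -∫ ω, X ω ∂μ‖ ^ 2 ∂μ := integral_nonneg fun _ => sq_nonneg _
  rw [integral_norm_add_sq hX, inner_neg_right, real_inner_self_eq_norm_sq, norm_neg] at hvar
  linarith

lemma abs_inner_integral_le [IsProbabilityMeasure μ] (hX : MemLp X 2 μ) (u : F) :
    |⟪∫ ω, X ω ∂μ, u⟫| ≤ √(∫ ω, ‖X ω‖ ^ 2 ∂μ) * ‖u‖ :=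
  (abs_real_inner_le_norm _ _).trans <| mul_le_mul_of_nonneg_right
    (Real.le_sqrt_of_sq_le (sq_norm_integral_le_integral_norm_sq hX)) (norm_nonneg u)

end SecondMoment

theorem lyapunov_two_sided_bound_general
    (d : ℕ) (ρ : Measure (EuclideanSpace ℝ (Fin d))) [IsProbabilityMeasure ρ]
    (hmom2 : Integrable (fun θ => ‖θ‖ ^ 2) ρ)
    (m θstar : EuclideanSpace ℝ (Fin d))
    (lam σ : ℝ) (hlam : 0 < lam)
    (V M a b cd E : ℝ)
    (hV : V = (1 / 2) * ∫ θ, ‖θ - θstar‖ ^ 2 ∂ρ)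
    (hM : M = ‖m - θstar‖)
    (ha : a = 2 * lam - d * σ ^ 2)
    (hb : b = Real.sqrt 2 * (lam + d * σ ^ 2))
    (hcd : cd = d * σ ^ 2 / 2)
    (hE : E = -lam * (∫ θ, (inner ℝ (θ - θstar) (θ - m) : ℝ) ∂ρ)
      + d * σ ^ 2 / 2 * ∫ θ, ‖θ - m‖ ^ 2 ∂ρ) :
    -a * V - b * Real.sqrt V * M ≤ E ∧
      E ≤ -a * V + b * Real.sqrt V * M + cd * M ^ 2 := by
  have hX : MemLp (fun θ => θ - θstar) 2 ρ :=
    ((memLp_two_iff_integrable_sq_norm aestronglyMeasurable_id).2 hmom2).sub (memLp_const θstar)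
  have hu : ‖θstar - m‖ = M := by rw [hM, norm_sub_rev]
  have hS : ∫ θ, ‖θ - θstar‖ ^ 2 ∂ρ = 2 * V := by rw [hV]; ring
  set J := ⟪∫ θ, θ - θstar ∂ρ, θstar - m⟫
  have hinner : ∫ θ, ⟪θ - θstar, θ - m⟫ ∂ρ = 2 * V + J := by
    simpa only [sub_add_sub_cancel, hS] using integral_inner_self_add hX (θstar - m)
  have hnorm : ∫ θ, ‖θ - m‖ ^ 2 ∂ρ = 2 * V + 2 * J + M ^ 2 := by
    simpa only [sub_add_sub_cancel, hS, hu] using integral_norm_add_sq hX (θstar - m)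
  have hJ : |J| ≤ √2 * √V * M := by
    simpa only [hS, Real.sqrt_mul zero_le_two, hu] using abs_inner_integral_le hX (θstar - m)
  have hdσ : (0 : ℝ) ≤ d * σ ^ 2 := by positivity
  have hcoef : |d * σ ^ 2 - lam| ≤ lam + d * σ ^ 2 :=
    abs_sub_le_iff.2 ⟨by linarith, by linarith⟩
  have hcross : |(d * σ ^ 2 - lam) * J| ≤ b * √V * M :=
    calc |(d * σ ^ 2 - lam) * J| = |d * σ ^ 2 - lam| * |J| := abs_mul _ _
      _ ≤ (lam + d * σ ^ 2) * (√2 * √V * M) :=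
        mul_le_mul hcoef hJ (abs_nonneg J) (by positivity)
      _ = b * √V * M := by rw [hb]; ring
  have hE' : E = -a * V + (d * σ ^ 2 - lam) * J + cd * M ^ 2 := by
    rw [hE, hinner, hnorm, ha, hcd]; ring
  have hcdM : 0 ≤ cd * M ^ 2 := by rw [hcd]; positivity
  constructor <;> linarith [abs_le.1 hcross]

/-- Two-sided Lyapunov bound for the drift-diffusion functional. -/
theorem lyapunov_two_sided_bound
    (d : ℕ) (ρ : Measure (EuclideanSpace ℝ (Fin d))) [IsProbabilityMeasure ρ]
    (hmom2 : Integrable (fun θ => ‖θ‖ ^ 2) ρ)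
    (m θstar : EuclideanSpace ℝ (Fin d))
    (lam σ : ℝ) (hlam : 0 < lam) (hσ : 0 < σ)
    (V M a b cd E : ℝ)
    (hV : V = (1 / 2) * ∫ θ, ‖θ - θstar‖ ^ 2 ∂ρ)
    (hM : M = ‖m - θstar‖)
    (ha : a = 2 * lam - d * σ ^ 2)
    (hb : b = Real.sqrt 2 * (lam + d * σ ^ 2))
    (hcd : cd = d * σ ^ 2 / 2)
    (hE : E = -lam * (∫ θ, (inner ℝ (θ - θstar) (θ - m) : ℝ) ∂ρ)
      + d * σ ^ 2 / 2 * ∫ θ, ‖θ - m‖ ^ 2 ∂ρ) :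
    -a * V - b * Real.sqrt V * M ≤ E ∧
      E ≤ -a * V + b * Real.sqrt V * M + cd * M ^ 2 :=
  lyapunov_two_sided_bound_general d ρ hmom2 m θstar lam σ hlam V M a b cd E hV hM ha hb hcd hE
end
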